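/- arXiv:2310.01697 — 4 statements merged into one kernel-verified Lean document; each statement's English description precedes it below -/
import Mathlib

section
/- Let X = ℓ^p(ℕ) with 1 ≤ p < ∞, fix 0 < c < c′ and a weight sequence (α_n)_{n≥1} with α_n ∈ (c, c′) for all n, and let L : X → X be the backward weighted shift L((x_n)_{n≥1}) = (α_n x_{n+1})_{n≥1}. Assume L is strongly transitive: for every nonempty open set U ⊆ X, X∖{0} ⊆ ⋃_{n=1}^∞ L^n(U). Let μ be a fully supported Borel probability measure on ℝ, let S(x) = (x_1/α_1, x_2/α_2, …), for r ∈ ℝ write r·S(x) = (r, x_1/α_1, x_2/α_2, …) ∈ ℓ^p(ℕ), and for a bounded continuous f : X → ℝ define the transfer operator L_f φ(x) = ∫_ℝ e^{f(r·S(x))} φ(r·S(x)) dμ(r). Then every conformal measure of L_f is fully supported: if ν is a Borel probability measure on X and ϱ > 0 satisfy ∫_X L_f φ dν = ϱ ∫_X φ dν for every bounded measurable φ, then ν(U) > 0 for every nonempty open set U ⊆ X. -/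
/-!
Suppose `ν U = 0` for a nonempty open `U`, and let `ψ ≥ 0` be bounded continuous with support
exactly `U`. For nonnegative bounded continuous `φ`, conformality gives
`∫ L_f φ dν = ϱ ∫ φ dν`, so `ν` vanishes on the (open) support of `L_f φ` whenever it vanishes on
that of `φ`; iterating, it vanishes on the support of every `L_f^n ψ`. Because `r ↦ r·S(x)` is
continuous and `μ` charges every open set, `x` lies in the support of `L_f φ` as soon as
`r·S(x)` lies in that of `φ` for a single `r`; since `z = z₀·S(Lz)`, the support of `L_f^n ψ`
contains `L^n U`. Strong transitivity now forces `ν` to be the point mass at `0`, and one more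
step with `φ` supported on `{0}ᶜ` kills `ν {0}` as well, because `1·S(0) ≠ 0`.
-/

open MeasureTheory Function Set
open scoped ENNReal lp

theorem lp.norm_le_mul_of_shift {E : Type*} [NormedAddCommGroup E] {p : ℝ≥0∞} (hp : p ≠ 0)
    {C : ℝ} (hC : 0 ≤ C) {x y : ℓ^p(ℕ, E)} (hy0 : y 0 = 0)
    (hy : ∀ n, ‖y (n + 1)‖ ≤ C * ‖x n‖) : ‖y‖ ≤ C * ‖x‖ := by
  obtain rfl | hp' := eq_or_ne p ⊤
  · refine lp.norm_le_of_forall_le (by positivity) fun i => ?_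
    cases i with
    | zero => simpa [hy0] using mul_nonneg hC (norm_nonneg x)
    | succ n => exact (hy n).trans (by gcongr; exact lp.norm_apply_le_norm ENNReal.top_ne_zero x n)
  · have hpr : 0 < p.toReal := ENNReal.toReal_pos hp hp'
    have hx := (lp.memℓp x).summable hpr
    have hy' := (summable_nat_add_iff 1).mpr ((lp.memℓp y).summable hpr)
    refine lp.norm_le_of_tsum_le hpr (mul_nonneg hC (lp.norm_nonneg' x)) ?_
    calc ∑' i, ‖y i‖ ^ p.toReal = ∑' n, ‖y (n + 1)‖ ^ p.toReal := by
          simp [((lp.memℓp y).summable hpr).tsum_eq_zero_add, hy0, hpr.ne']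
      _ ≤ ∑' n, C ^ p.toReal * ‖x n‖ ^ p.toReal := by
          refine hy'.tsum_le_tsum (fun n => ?_) (hx.mul_left _)
          rw [← Real.mul_rpow hC (norm_nonneg _)]
          gcongr
          exact hy n
      _ = (C * ‖x‖) ^ p.toReal := by
          rw [tsum_mul_left, ← lp.norm_rpow_eq_tsum hpr, ← Real.mul_rpow hC (lp.norm_nonneg' x)]

section Prepend

variable {p : ℝ≥0∞} {α : ℕ → ℝ} {j : ℝ → ℓ^p(ℕ, ℝ) → ℓ^p(ℕ, ℝ)}

theorem prepend_eq_single_add (hj0 : ∀ r x, (j r x : ∀ _ : ℕ, ℝ) 0 = r)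
    (hjs : ∀ r x n, (j r x : ∀ _ : ℕ, ℝ) (n + 1) = (x : ∀ _ : ℕ, ℝ) n / α n) (r : ℝ)
    (x : ℓ^p(ℕ, ℝ)) : j r x = lp.single p 0 r + j 0 x := by
  ext (_ | n) <;> simp [hj0, hjs, lp.single_apply]

theorem prepend_zero_sub (hj0 : ∀ r x, (j r x : ∀ _ : ℕ, ℝ) 0 = r)
    (hjs : ∀ r x n, (j r x : ∀ _ : ℕ, ℝ) (n + 1) = (x : ∀ _ : ℕ, ℝ) n / α n)
    (x y : ℓ^p(ℕ, ℝ)) : j 0 (x - y) = j 0 x - j 0 y := by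
  ext (_ | n) <;> simp [hj0, hjs, sub_div]

theorem norm_prepend_zero_le [Fact (1 ≤ p)] {c : ℝ} (hc : 0 < c) (hα : ∀ n, c < α n)
    (hj0 : ∀ r x, (j r x : ∀ _ : ℕ, ℝ) 0 = r)
    (hjs : ∀ r x n, (j r x : ∀ _ : ℕ, ℝ) (n + 1) = (x : ∀ _ : ℕ, ℝ) n / α n)
    (x : ℓ^p(ℕ, ℝ)) : ‖j 0 x‖ ≤ c⁻¹ * ‖x‖ := by
  refine lp.norm_le_mul_of_shift (zero_lt_one.trans_le Fact.out).ne' (by positivity) (hj0 0 x)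
    fun n => ?_
  rw [hjs, norm_div, Real.norm_of_nonneg (hc.trans (hα n)).le, div_eq_inv_mul]
  gcongr
  exact (hα n).le

theorem continuous_uncurry_prepend [Fact (1 ≤ p)] {c : ℝ} (hc : 0 < c) (hα : ∀ n, c < α n)
    (hj0 : ∀ r x, (j r x : ∀ _ : ℕ, ℝ) 0 = r)
    (hjs : ∀ r x n, (j r x : ∀ _ : ℕ, ℝ) (n + 1) = (x : ∀ _ : ℕ, ℝ) n / α n) :
    Continuous (uncurry j) := by
  have hlip : LipschitzWith (Real.toNNReal c⁻¹) (j 0) := by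
    refine LipschitzWith.of_dist_le' fun x y => ?_
    rw [dist_eq_norm, dist_eq_norm, ← prepend_zero_sub hj0 hjs]
    exact norm_prepend_zero_le hc hα hj0 hjs _
  have hsplit : uncurry j = fun q => lp.single p 0 q.1 + j 0 q.2 :=
    funext fun q => prepend_eq_single_add hj0 hjs q.1 q.2
  rw [hsplit]
  exact ((lp.isometry_single 0).continuous.comp continuous_fst).add
    (hlip.continuous.comp continuous_snd)

theorem prepend_apply_zero_of_shift (hα : ∀ n, α n ≠ 0) {L : ℓ^p(ℕ, ℝ) → ℓ^p(ℕ, ℝ)}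
    (hL : ∀ x n, (L x : ∀ _ : ℕ, ℝ) n = α n * (x : ∀ _ : ℕ, ℝ) (n + 1))
    (hj0 : ∀ r x, (j r x : ∀ _ : ℕ, ℝ) 0 = r)
    (hjs : ∀ r x n, (j r x : ∀ _ : ℕ, ℝ) (n + 1) = (x : ∀ _ : ℕ, ℝ) n / α n)
    (z : ℓ^p(ℕ, ℝ)) : j (z 0) (L z) = z := by
  ext (_ | n)
  · exact hj0 _ _
  · rw [hjs, hL, mul_div_cancel_left₀ _ (hα n)]

end Prepend

section Transfer

variable {Ω X : Type*} [TopologicalSpace Ω] [MeasurableSpace Ω] [TopologicalSpace X]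

def IsNonnegBoundedContinuous (φ : X → ℝ) : Prop :=
  Continuous φ ∧ 0 ≤ φ ∧ BddAbove (range φ)

namespace IsNonnegBoundedContinuous

variable {φ : X → ℝ}

theorem exists_abs_le (hφ : IsNonnegBoundedContinuous φ) : ∃ B, ∀ x, |φ x| ≤ B := by
  obtain ⟨B, hB⟩ := hφ.2.2
  exact ⟨B, fun x => (abs_of_nonneg (hφ.2.1 x)).trans_le (hB ⟨x, rfl⟩)⟩

theorem comp {Y : Type*} [TopologicalSpace Y] (hφ : IsNonnegBoundedContinuous φ) {g : Y → X}
    (hg : Continuous g) : IsNonnegBoundedContinuous (φ ∘ g) :=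
  ⟨hφ.1.comp hg, fun y => hφ.2.1 (g y), hφ.2.2.mono (range_comp_subset_range g φ)⟩

theorem exp_mul (hφ : IsNonnegBoundedContinuous φ) {f : X → ℝ} (hf : Continuous f) {M : ℝ}
    (hfM : ∀ x, f x ≤ M) : IsNonnegBoundedContinuous fun x => Real.exp (f x) * φ x := by
  obtain ⟨B, hB⟩ := hφ.2.2
  refine ⟨(Real.continuous_exp.comp hf).mul hφ.1,
    fun x => mul_nonneg (Real.exp_pos _).le (hφ.2.1 x), ⟨Real.exp M * B, ?_⟩⟩
  rintro _ ⟨x, rfl⟩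
  exact mul_le_mul (Real.exp_le_exp.mpr (hfM x)) (hB ⟨x, rfl⟩) (hφ.2.1 x) (Real.exp_pos M).le

theorem integrable [MeasurableSpace X] [OpensMeasurableSpace X] {ν : Measure X}
    [IsFiniteMeasure ν] (hφ : IsNonnegBoundedContinuous φ) : Integrable φ ν := by
  obtain ⟨B, hB⟩ := hφ.exists_abs_le
  exact .of_bound hφ.1.aestronglyMeasurable B (.of_forall hB)

theorem integral_eq_zero_iff [MeasurableSpace X] [OpensMeasurableSpace X] {ν : Measure X}
    [IsFiniteMeasure ν] (hφ : IsNonnegBoundedContinuous φ) :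
    ∫ x, φ x ∂ν = 0 ↔ ν (support φ) = 0 :=
  (integral_eq_zero_iff_of_nonneg hφ.2.1 hφ.integrable).trans ae_iff

theorem integral_pos [MeasurableSpace X] [OpensMeasurableSpace X] {μ : Measure X}
    [IsFiniteMeasure μ] [μ.IsOpenPosMeasure] (hφ : IsNonnegBoundedContinuous φ) {x : X}
    (hx : 0 < φ x) : 0 < ∫ x, φ x ∂μ := by
  rw [integral_pos_iff_support_of_nonneg hφ.2.1 hφ.integrable]
  exact hφ.1.isOpen_support.measure_pos μ ⟨x, hx.ne'⟩

theorem integral_fst [FirstCountableTopology X] [OpensMeasurableSpace Ω] {μ : Measure Ω}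
    [IsFiniteMeasure μ] {F : Ω × X → ℝ} (hF : IsNonnegBoundedContinuous F) :
    IsNonnegBoundedContinuous fun x => ∫ r, F (r, x) ∂μ := by
  obtain ⟨B, hB⟩ := hF.exists_abs_le
  refine ⟨?_, fun x => integral_nonneg fun r => hF.2.1 (r, x), ?_⟩
  · exact continuous_of_dominated (bound := fun _ => B)
      (fun x => (hF.1.comp (.prodMk_left x)).aestronglyMeasurable)
      (fun x => .of_forall fun r => hB (r, x)) (integrable_const B)
      (.of_forall fun r => hF.1.comp (.prodMk_right r))
  · refine ⟨B * μ.real univ, ?_⟩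
    rintro _ ⟨x, rfl⟩
    exact (le_abs_self _).trans <| Real.norm_eq_abs _ ▸
      norm_integral_le_of_norm_le_const (.of_forall fun r => hB (r, x))

end IsNonnegBoundedContinuous

theorem IsOpen.exists_isNonnegBoundedContinuous_support_eq [PerfectlyNormalSpace X] {V : Set X}
    (hV : IsOpen V) : ∃ φ : X → ℝ, IsNonnegBoundedContinuous φ ∧ support φ = V := by
  obtain ⟨φ, hφV, hφ01⟩ :=
    perfectlyNormalSpace_iff_forall_isClosed_preimage_zero.mp ‹_› Vᶜ hV.isClosed_compl
  refine ⟨φ, ⟨φ.continuous, fun x => (hφ01 x).1, ⟨1, ?_⟩⟩, ?_⟩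
  · rintro _ ⟨x, rfl⟩
    exact (hφ01 x).2
  · rw [← compl_compl V, hφV]
    rfl

noncomputable def transferOperator (μ : Measure Ω) (f : X → ℝ) (j : Ω → X → X) (φ : X → ℝ)
    (x : X) : ℝ :=
  ∫ r, Real.exp (f (j r x)) * φ (j r x) ∂μ

variable {μ : Measure Ω} {f : X → ℝ} {j : Ω → X → X} {φ : X → ℝ}

theorem isNonnegBoundedContinuous_transferOperator [FirstCountableTopology X]
    [OpensMeasurableSpace Ω] [IsFiniteMeasure μ]
    (hφ : IsNonnegBoundedContinuous φ) (hf : Continuous f) {M : ℝ} (hfM : ∀ x, f x ≤ M)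
    (hj : Continuous (uncurry j)) : IsNonnegBoundedContinuous (transferOperator μ f j φ) :=
  ((hφ.exp_mul hf hfM).comp hj).integral_fst

theorem mem_support_transferOperator [OpensMeasurableSpace Ω] [IsFiniteMeasure μ]
    [μ.IsOpenPosMeasure] (hφ : IsNonnegBoundedContinuous φ) (hf : Continuous f) {M : ℝ}
    (hfM : ∀ x, f x ≤ M) (hj : Continuous (uncurry j)) {r : Ω} {x : X}
    (hr : j r x ∈ support φ) : x ∈ support (transferOperator μ f j φ) := by
  have hF := (hφ.exp_mul hf hfM).comp (hj.comp (.prodMk_left x))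
  refine (hF.integral_pos (μ := μ) (x := r) ?_).ne'
  exact mul_pos (Real.exp_pos _) ((hφ.2.1 _).lt_of_ne' hr)

theorem mem_support_iterate_transferOperator [FirstCountableTopology X] [OpensMeasurableSpace Ω]
    [IsFiniteMeasure μ] [μ.IsOpenPosMeasure] (hφ : IsNonnegBoundedContinuous φ)
    (hf : Continuous f) {M : ℝ} (hfM : ∀ x, f x ≤ M) (hj : Continuous (uncurry j)) {L : X → X}
    (hjL : ∀ z, ∃ r, j r (L z) = z) {y : X} (hy : y ∈ support φ) (n : ℕ) :
    L^[n] y ∈ support ((transferOperator μ f j)^[n] φ) := by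
  induction n with
  | zero => exact hy
  | succ n ih =>
    obtain ⟨r, hr⟩ := hjL (L^[n] y)
    rw [iterate_succ_apply', iterate_succ_apply']
    have hφn := Iterate.rec IsNonnegBoundedContinuous hφ
      (fun _ hψ => isNonnegBoundedContinuous_transferOperator (μ := μ) hψ hf hfM hj) n
    exact mem_support_transferOperator hφn hf hfM hj (hr.symm ▸ ih)

end Transfer

section Conformal

variable {X : Type*} [TopologicalSpace X] [MeasurableSpace X]

def IsConformalMeasure (T : (X → ℝ) → X → ℝ) (ν : Measure X) (ϱ : ℝ) : Prop :=
  ∀ φ : X → ℝ, Measurable φ → (∃ M, ∀ x, |φ x| ≤ M) → ∫ x, T φ x ∂ν = ϱ * ∫ x, φ x ∂ν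

variable [OpensMeasurableSpace X] {ν : Measure X} [IsFiniteMeasure ν] {ϱ : ℝ}

theorem IsConformalMeasure.measure_support_eq_zero {T : (X → ℝ) → X → ℝ}
    (hν : IsConformalMeasure T ν ϱ) {φ : X → ℝ} (hφ : IsNonnegBoundedContinuous φ)
    (hTφ : IsNonnegBoundedContinuous (T φ)) (h0 : ν (support φ) = 0) :
    ν (support (T φ)) = 0 := by
  rw [← hTφ.integral_eq_zero_iff, hν φ hφ.1.measurable hφ.exists_abs_le,
    hφ.integral_eq_zero_iff.mpr h0, mul_zero]

theorem IsConformalMeasure.measure_support_iterate_eq_zero {T : (X → ℝ) → X → ℝ}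
    (hν : IsConformalMeasure T ν ϱ)
    (hT : ∀ φ, IsNonnegBoundedContinuous φ → IsNonnegBoundedContinuous (T φ)) {φ : X → ℝ}
    (hφ : IsNonnegBoundedContinuous φ) (h0 : ν (support φ) = 0) (n : ℕ) :
    ν (support (T^[n] φ)) = 0 := by
  induction n with
  | zero => exact h0
  | succ n ih =>
    have hφn := Iterate.rec IsNonnegBoundedContinuous hφ hT n
    rw [iterate_succ_apply']
    exact hν.measure_support_eq_zero hφn (hT _ hφn) ih

variable [FirstCountableTopology X] [PerfectlyNormalSpace X] {Ω : Type*} [TopologicalSpace Ω]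
  [MeasurableSpace Ω] [OpensMeasurableSpace Ω] {μ : Measure Ω} [IsFiniteMeasure μ]
  [μ.IsOpenPosMeasure] {f : X → ℝ} {j : Ω → X → X}

theorem IsConformalMeasure.measure_iUnion_image_iterate_eq_zero
    (hν : IsConformalMeasure (transferOperator μ f j) ν ϱ) (hf : Continuous f) {M : ℝ}
    (hfM : ∀ x, f x ≤ M) (hj : Continuous (uncurry j)) {L : X → X}
    (hjL : ∀ z, ∃ r, j r (L z) = z) {U : Set X} (hU : IsOpen U) (hνU : ν U = 0) :
    ν (⋃ n, L^[n] '' U) = 0 := by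
  obtain ⟨ψ, hψ, rfl⟩ := hU.exists_isNonnegBoundedContinuous_support_eq
  have hT : ∀ φ, IsNonnegBoundedContinuous φ →
      IsNonnegBoundedContinuous (transferOperator μ f j φ) := fun φ hφ =>
    isNonnegBoundedContinuous_transferOperator hφ hf hfM hj
  refine measure_iUnion_null fun n =>
    measure_mono_null ?_ (hν.measure_support_iterate_eq_zero hT hψ hνU n)
  rintro _ ⟨y, hy, rfl⟩
  exact mem_support_iterate_transferOperator hψ hf hfM hj hjL hy n

theorem IsConformalMeasure.measure_singleton_eq_zero [T1Space X]
    (hν : IsConformalMeasure (transferOperator μ f j) ν ϱ) (hf : Continuous f) {M : ℝ}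
    (hfM : ∀ x, f x ≤ M) (hj : Continuous (uncurry j)) {x₀ : X} {r : Ω} (hr : j r x₀ ≠ x₀)
    (hνc : ν {x₀}ᶜ = 0) : ν {x₀} = 0 := by
  obtain ⟨ψ, hψ, hψx₀⟩ :=
    (isOpen_compl_singleton (x := x₀)).exists_isNonnegBoundedContinuous_support_eq
  have hTψ := isNonnegBoundedContinuous_transferOperator (μ := μ) hψ hf hfM hj
  refine measure_mono_null (singleton_subset_iff.mpr ?_)
    (hν.measure_support_eq_zero hψ hTψ (hψx₀ ▸ hνc))
  exact mem_support_transferOperator hψ hf hfM hj (r := r) (by rw [hψx₀]; exact hr)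

end Conformal

theorem stmt_3_general
    (p : ℝ≥0∞) [Fact (1 ≤ p)]
    (c c' : ℝ) (hc : 0 < c)
    (α : ℕ → ℝ) (hα : ∀ n, α n ∈ Set.Ioo c c')
    (L : lp (fun _ : ℕ => ℝ) p → lp (fun _ : ℕ => ℝ) p)
    (hLdef : ∀ (x : lp (fun _ : ℕ => ℝ) p) (n : ℕ), (L x : ∀ _ : ℕ, ℝ) n = α n * (x : ∀ _ : ℕ, ℝ) (n + 1))
    (hst : ∀ U : Set (lp (fun _ : ℕ => ℝ) p), IsOpen U → U.Nonempty →
      (Set.univ \ {0} : Set (lp (fun _ : ℕ => ℝ) p)) ⊆ ⋃ n : ℕ, L^[n + 1] '' U)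
    (μ : Measure ℝ) [IsProbabilityMeasure μ]
    (hμfull : ∀ V : Set ℝ, IsOpen V → V.Nonempty → 0 < μ V)
    (f : lp (fun _ : ℕ => ℝ) p → ℝ) (hfc : Continuous f) (hfb : ∃ M, ∀ x, |f x| ≤ M)
    (j : ℝ → lp (fun _ : ℕ => ℝ) p → lp (fun _ : ℕ => ℝ) p)
    (hj0 : ∀ r x, (j r x : ∀ _ : ℕ, ℝ) 0 = r)
    (hjs : ∀ r x n, (j r x : ∀ _ : ℕ, ℝ) (n + 1) = (x : ∀ _ : ℕ, ℝ) n / α n)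
    [MeasurableSpace (lp (fun _ : ℕ => ℝ) p)] [BorelSpace (lp (fun _ : ℕ => ℝ) p)]
    (Lf : (lp (fun _ : ℕ => ℝ) p → ℝ) → (lp (fun _ : ℕ => ℝ) p → ℝ))
    (hLf : ∀ φ x, Lf φ x = ∫ r, Real.exp (f (j r x)) * φ (j r x) ∂μ)
    (ν : Measure (lp (fun _ : ℕ => ℝ) p)) [IsProbabilityMeasure ν]
    (ϱ : ℝ)
    (hconf : ∀ φ : lp (fun _ : ℕ => ℝ) p → ℝ, Measurable φ → (∃ M, ∀ x, |φ x| ≤ M) →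
      ∫ x, Lf φ x ∂ν = ϱ * ∫ x, φ x ∂ν) :
    ∀ U : Set (lp (fun _ : ℕ => ℝ) p), IsOpen U → U.Nonempty → 0 < ν U := by
  intro U hU hUne
  obtain rfl : Lf = transferOperator μ f j := funext₂ hLf
  have hν : IsConformalMeasure (transferOperator μ f j) ν ϱ := hconf
  have : μ.IsOpenPosMeasure := ⟨fun V hV hV₀ => (hμfull V hV hV₀).ne'⟩
  obtain ⟨M, hM⟩ := hfb
  have hfM : ∀ x, f x ≤ M := fun x => (abs_le.mp (hM x)).2
  have hj := continuous_uncurry_prepend hc (fun n => (hα n).1) hj0 hjs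
  have hjL : ∀ z, ∃ r, j r (L z) = z := fun z =>
    ⟨_, prepend_apply_zero_of_shift (fun n => (hc.trans (hα n).1).ne') hLdef hj0 hjs z⟩
  by_contra! hνU
  have hνc : ν {0}ᶜ = 0 := by
    refine measure_mono_null ?_ (hν.measure_iUnion_image_iterate_eq_zero hfc hfM hj hjL hU
      (nonpos_iff_eq_zero.mp hνU))
    rw [compl_eq_univ_sdiff]
    exact (hst U hU hUne).trans (iUnion_subset fun n => subset_iUnion_of_subset (n + 1) subset_rfl)
  have hj10 : j 1 0 ≠ 0 := fun h => by simpa [hj0] using congrArg (fun x : lp _ p => x 0) h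
  simpa using measure_union_null (hν.measure_singleton_eq_zero hfc hfM hj hj10 hνc) hνc

/-- Every conformal measure of the transfer operator of a strongly transitive
backward weighted shift on `ℓ^p(ℕ)` is fully supported. -/
theorem stmt_3
    (p : ℝ≥0∞) [Fact (1 ≤ p)] (hptop : p ≠ ⊤)
    (c c' : ℝ) (hc : 0 < c) (hcc' : c < c')
    (α : ℕ → ℝ) (hα : ∀ n, α n ∈ Set.Ioo c c')
    (L : lp (fun _ : ℕ => ℝ) p → lp (fun _ : ℕ => ℝ) p)
    (hLdef : ∀ (x : lp (fun _ : ℕ => ℝ) p) (n : ℕ), (L x : ∀ _ : ℕ, ℝ) n = α n * (x : ∀ _ : ℕ, ℝ) (n + 1))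
    (hst : ∀ U : Set (lp (fun _ : ℕ => ℝ) p), IsOpen U → U.Nonempty →
      (Set.univ \ {0} : Set (lp (fun _ : ℕ => ℝ) p)) ⊆ ⋃ n : ℕ, L^[n + 1] '' U)
    (μ : Measure ℝ) [IsProbabilityMeasure μ]
    (hμfull : ∀ V : Set ℝ, IsOpen V → V.Nonempty → 0 < μ V)
    (f : lp (fun _ : ℕ => ℝ) p → ℝ) (hfc : Continuous f) (hfb : ∃ M, ∀ x, |f x| ≤ M)
    (j : ℝ → lp (fun _ : ℕ => ℝ) p → lp (fun _ : ℕ => ℝ) p)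
    (hj0 : ∀ r x, (j r x : ∀ _ : ℕ, ℝ) 0 = r)
    (hjs : ∀ r x n, (j r x : ∀ _ : ℕ, ℝ) (n + 1) = (x : ∀ _ : ℕ, ℝ) n / α n)
    [MeasurableSpace (lp (fun _ : ℕ => ℝ) p)] [BorelSpace (lp (fun _ : ℕ => ℝ) p)]
    (Lf : (lp (fun _ : ℕ => ℝ) p → ℝ) → (lp (fun _ : ℕ => ℝ) p → ℝ))
    (hLf : ∀ φ x, Lf φ x = ∫ r, Real.exp (f (j r x)) * φ (j r x) ∂μ)
    (ν : Measure (lp (fun _ : ℕ => ℝ) p)) [IsProbabilityMeasure ν]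
    (ϱ : ℝ) (hϱ : 0 < ϱ)
    (hconf : ∀ φ : lp (fun _ : ℕ => ℝ) p → ℝ, Measurable φ → (∃ M, ∀ x, |φ x| ≤ M) →
      ∫ x, Lf φ x ∂ν = ϱ * ∫ x, φ x ∂ν) :
    ∀ U : Set (lp (fun _ : ℕ => ℝ) p), IsOpen U → U.Nonempty → 0 < ν U :=
  stmt_3_general p c c' hc α hα L hLdef hst μ hμfull f hfc hfb j hj0 hjs Lf hLf ν ϱ hconf
end

section
/- Let X be a compact metric space and κ a Markov transition probability kernel on X with the Feller property. Let (Φ_n)_{n≥0} be the Markov chain with kernel κ and any initial distribution μ, realized as the coordinate process on X^ℕ under ℙ_μ. Then ℙ_μ-almost surely the following holds: whenever (n_k) is a strictly increasing sequence of integers and ν is a Borel probability measure on X such that (1/n_k) Σ_{i=0}^{n_k−1} δ_{Φ_i} converges to ν in the weak-* topology, ν is a stationary measure, i.e. ∫_X κ(x)(A) dν(x) = ν(A) for every Borel set A ⊆ X. -/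
open MeasureTheory Filter Finset Topology
open scoped ENNReal

/-!
For continuous `φ` put `Pφ x = ∫ φ d(κ x)`. The increments `Dᵢ = φ(Φᵢ₊₁) - Pφ(Φᵢ)` are bounded
martingale differences, hence orthogonal in `L²`, so `(1/n) ∑_{i<n} Dᵢ → 0` almost surely: along the
squares the second moments `≲ 1/n²` are summable, and bounded increments fill the gaps.
Telescoping, `(1/n) ∑_{i<n} (φ - Pφ)(Φᵢ) → 0` almost surely. One null set serves a countable dense
family of `φ` in `C(X, ℝ)`; along a subsequence on which the empirical measures converge to `ν`
this gives `∫ φ dν = ∫ Pφ dν` for that family, then by continuity in `φ` for all continuous `φ`,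
and continuous functions determine measures, so `ν.bind κ = ν`.
-/

lemma tendsto_nat_sqrt_atTop : Tendsto Nat.sqrt atTop atTop :=
  tendsto_atTop_atTop.2 fun b => ⟨b * b, fun _ h => Nat.le_sqrt.2 h⟩

lemma abs_sum_le_card_mul {D : ℕ → ℝ} {B : ℝ} (hD : ∀ i, |D i| ≤ B) (s : Finset ℕ) :
    |∑ i ∈ s, D i| ≤ #s * B := by
  simpa using (abs_sum_le_sum_abs D s).trans (sum_le_sum fun i _ => hD i)

/-- Between `s²` and `(s + 1)²` the partial sum moves by at most `2 s B`. -/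
lemma tendsto_avg_of_tendsto_avg_sq {D : ℕ → ℝ} {B : ℝ} (hD : ∀ i, |D i| ≤ B)
    (hsq : Tendsto (fun n : ℕ => ((n ^ 2 : ℕ) : ℝ)⁻¹ * ∑ i ∈ range (n ^ 2), D i) atTop (𝓝 0)) :
    Tendsto (fun m : ℕ => (m : ℝ)⁻¹ * ∑ i ∈ range m, D i) atTop (𝓝 0) := by
  have hB : 0 ≤ B := (abs_nonneg _).trans (hD 0)
  set a : ℕ → ℝ := fun n => ((n ^ 2 : ℕ) : ℝ)⁻¹ * ∑ i ∈ range (n ^ 2), D i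
  have hbound : ∀ m : ℕ, 1 ≤ m →
      |(m : ℝ)⁻¹ * ∑ i ∈ range m, D i| ≤ |a (Nat.sqrt m)| + 2 * B * (Nat.sqrt m : ℝ)⁻¹ := by
    intro m hm
    set s := Nat.sqrt m
    have hs : 0 < s := Nat.sqrt_pos.2 hm
    have hsm : s ^ 2 ≤ m := Nat.sqrt_le' m
    have hgap : ((m - s ^ 2 : ℕ) : ℝ) ≤ 2 * s := by
      have : m ≤ s * s + s + s := Nat.sqrt_le_add m
      exact_mod_cast (by rw [sq]; omega : m - s ^ 2 ≤ 2 * s)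
    have htail : |∑ i ∈ Ico (s ^ 2) m, D i| ≤ 2 * s * B := by
      refine (abs_sum_le_card_mul hD _).trans ?_
      rw [Nat.card_Ico]
      exact mul_le_mul_of_nonneg_right hgap hB
    have hm' : ((s ^ 2 : ℕ) : ℝ) ≤ m := by exact_mod_cast hsm
    rw [← sum_range_add_sum_Ico _ hsm, abs_mul, abs_inv, Nat.abs_cast]
    calc (m : ℝ)⁻¹ * |∑ i ∈ range (s ^ 2), D i + ∑ i ∈ Ico (s ^ 2) m, D i|
        ≤ ((s ^ 2 : ℕ) : ℝ)⁻¹ * (|∑ i ∈ range (s ^ 2), D i| + 2 * s * B) := by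
          gcongr
          exact (abs_add_le _ _).trans (by gcongr)
      _ = |a s| + 2 * B * (s : ℝ)⁻¹ := by
          simp only [a, abs_mul, abs_inv, Nat.abs_cast]
          field_simp
          push_cast
          ring
  have hlim : Tendsto (fun n : ℕ => |a n| + 2 * B * (n : ℝ)⁻¹) atTop (𝓝 0) := by
    simpa using hsq.abs.add (tendsto_inv_atTop_nhds_zero_nat.const_mul (2 * B))
  refine (tendsto_zero_iff_abs_tendsto_zero _).2 <| squeeze_zero'
    (Eventually.of_forall fun _ => abs_nonneg _) (eventually_atTop.2 ⟨1, hbound⟩)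
    (hlim.comp tendsto_nat_sqrt_atTop)

section Orthogonal

variable {Ω : Type*} [MeasurableSpace Ω] {P : Measure Ω}

lemma ae_tendsto_zero_of_summable_integral_sq {f : ℕ → Ω → ℝ}
    (hf : ∀ n, Integrable (fun ω => f n ω ^ 2) P)
    (hsum : Summable fun n => ∫ ω, f n ω ^ 2 ∂P) :
    ∀ᵐ ω ∂P, Tendsto (fun n => f n ω) atTop (𝓝 0) := by
  have hmeas : ∀ n, AEMeasurable (fun ω => ENNReal.ofReal (f n ω ^ 2)) P :=
    fun n => (hf n).aemeasurable.ennreal_ofReal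
  have hfin : ∫⁻ ω, ∑' n, ENNReal.ofReal (f n ω ^ 2) ∂P ≠ ∞ := by
    rw [lintegral_tsum hmeas]
    simp_rw [← ofReal_integral_eq_lintegral_ofReal (hf _) (ae_of_all _ fun _ => sq_nonneg _)]
    rw [← ENNReal.ofReal_tsum_of_nonneg (fun n => integral_nonneg fun _ => sq_nonneg _) hsum]
    exact ENNReal.ofReal_ne_top
  filter_upwards [ae_lt_top' (AEMeasurable.tsum hmeas) hfin] with ω hω
  have hsq : Tendsto (fun n => f n ω ^ 2) atTop (𝓝 0) := by
    simpa [ENNReal.toReal_ofReal (sq_nonneg _)] using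
      (ENNReal.summable_toReal hω.ne).tendsto_atTop_zero
  have habs := (Real.continuous_sqrt.tendsto 0).comp hsq
  simp only [Function.comp_def, Real.sqrt_sq_eq_abs, Real.sqrt_zero] at habs
  exact (tendsto_zero_iff_abs_tendsto_zero _).2 habs

variable [IsProbabilityMeasure P] {D : ℕ → Ω → ℝ} {B : ℝ}

lemma integral_sq_sum_le_of_orthogonal (hmeas : ∀ i, AEStronglyMeasurable (D i) P)
    (hD : ∀ i ω, |D i ω| ≤ B) (horth : ∀ i j, i < j → ∫ ω, D i ω * D j ω ∂P = 0) (n : ℕ) :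
    ∫ ω, (∑ i ∈ range n, D i ω) ^ 2 ∂P ≤ n * B ^ 2 := by
  have hL2 : ∀ i, MemLp (D i) 2 P := fun i =>
    MemLp.of_bound (hmeas i) B (ae_of_all _ fun ω => by simpa using hD i ω)
  have hint : ∀ i j, Integrable (fun ω => D i ω * D j ω) P :=
    fun i j => (hL2 i).integrable_mul (hL2 j)
  have hdiag : ∀ i, ∫ ω, D i ω * D i ω ∂P ≤ B ^ 2 := fun i => by
    simpa using integral_mono (hint i i) (integrable_const (B ^ 2)) fun ω => by
      simpa [← sq, sq_abs] using pow_le_pow_left₀ (abs_nonneg _) (hD i ω) 2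
  have hoff : ∀ i j, i ≠ j → ∫ ω, D i ω * D j ω ∂P = 0 := fun i j hij => by
    rcases hij.lt_or_gt with h | h
    · exact horth i j h
    · simpa only [mul_comm] using horth j i h
  have hexpand : ∀ ω, (∑ i ∈ range n, D i ω) ^ 2 =
      ∑ i ∈ range n, ∑ j ∈ range n, D i ω * D j ω := fun ω => by rw [sq, sum_mul_sum]
  simp_rw [hexpand]
  rw [integral_finsetSum _ fun i _ => integrable_finsetSum _ fun j _ => hint i j]
  simp_rw [integral_finsetSum _ fun j _ => hint _ j]
  calc ∑ i ∈ range n, ∑ j ∈ range n, ∫ ω, D i ω * D j ω ∂P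
      = ∑ i ∈ range n, ∫ ω, D i ω * D i ω ∂P :=
        sum_congr rfl fun i hi => sum_eq_single_of_mem i hi fun j _ hji => hoff i j hji.symm
    _ ≤ ∑ _i ∈ range n, B ^ 2 := sum_le_sum fun i _ => hdiag i
    _ = n * B ^ 2 := by simp

theorem ae_tendsto_avg_of_orthogonal (hmeas : ∀ i, AEStronglyMeasurable (D i) P)
    (hD : ∀ i ω, |D i ω| ≤ B) (horth : ∀ i j, i < j → ∫ ω, D i ω * D j ω ∂P = 0) :
    ∀ᵐ ω ∂P, Tendsto (fun n : ℕ => (n : ℝ)⁻¹ * ∑ i ∈ range n, D i ω) atTop (𝓝 0) := by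
  set A : ℕ → Ω → ℝ := fun n ω => ((n ^ 2 : ℕ) : ℝ)⁻¹ * ∑ i ∈ range (n ^ 2), D i ω
  have hL2 : ∀ i, MemLp (D i) 2 P := fun i =>
    MemLp.of_bound (hmeas i) B (ae_of_all _ fun ω => by simpa using hD i ω)
  have hA : ∀ n, Integrable (fun ω => A n ω ^ 2) P := fun n =>
    ((memLp_finsetSum _ fun i _ => hL2 i).const_mul _).integrable_sq
  have hvar : ∀ n, ∫ ω, A n ω ^ 2 ∂P ≤ B ^ 2 * ((n : ℝ) ^ 2)⁻¹ := fun n => by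
    simp_rw [A, mul_pow, integral_const_mul]
    calc (((n ^ 2 : ℕ) : ℝ)⁻¹) ^ 2 * ∫ ω, (∑ i ∈ range (n ^ 2), D i ω) ^ 2 ∂P
        ≤ (((n ^ 2 : ℕ) : ℝ)⁻¹) ^ 2 * ((n ^ 2 : ℕ) * B ^ 2) := by
          gcongr
          exact integral_sq_sum_le_of_orthogonal hmeas hD horth _
      _ = B ^ 2 * ((n : ℝ) ^ 2)⁻¹ := by
          rcases n.eq_zero_or_pos with rfl | hn
          · simp
          · push_cast
            field_simp
  have hsum : Summable fun n => ∫ ω, A n ω ^ 2 ∂P :=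
    Summable.of_nonneg_of_le (fun n => integral_nonneg fun _ => sq_nonneg _) hvar
      ((Real.summable_nat_pow_inv.2 one_lt_two).mul_left _)
  filter_upwards [ae_tendsto_zero_of_summable_integral_sq hA hsum] with ω hω
  exact tendsto_avg_of_tendsto_avg_sq (hD · ω) hω

end Orthogonal

lemma eq_of_tendsto_avg_sub {u v : ℕ → ℝ} {nk : ℕ → ℕ} (hnk : StrictMono nk) {a b : ℝ}
    (hu : Tendsto (fun k => (nk k : ℝ)⁻¹ * ∑ i ∈ range (nk k), u i) atTop (𝓝 a))
    (hv : Tendsto (fun k => (nk k : ℝ)⁻¹ * ∑ i ∈ range (nk k), v i) atTop (𝓝 b))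
    (h : Tendsto (fun n : ℕ => (n : ℝ)⁻¹ * ∑ i ∈ range n, (u i - v i)) atTop (𝓝 0)) :
    a = b := by
  have huv := hu.sub hv
  simp_rw [← mul_sub, ← sum_sub_distrib] at huv
  exact sub_eq_zero.1 (tendsto_nhds_unique huv (h.comp hnk.tendsto_atTop))

section Markov

variable {X : Type*} [MeasurableSpace X]

def HasMarkovProperty (κ : X → Measure X) (ℙ : Measure (ℕ → X)) : Prop :=
  ∀ n : ℕ, ∀ g : X → ℝ, Measurable g → (∃ M, ∀ x, |g x| ≤ M) →
    ∀ h : (Fin (n + 1) → X) → ℝ, Measurable h → (∃ M, ∀ v, |h v| ≤ M) →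
    ∫ ω, h (fun i => ω i.1) * g (ω (n + 1)) ∂ℙ
      = ∫ ω, h (fun i => ω i.1) * (∫ y, g y ∂κ (ω n)) ∂ℙ

lemma abs_integral_le_of_abs_le (ρ : Measure X) [IsProbabilityMeasure ρ] {φ : X → ℝ} {C : ℝ}
    (hC : ∀ x, |φ x| ≤ C) : |∫ x, φ x ∂ρ| ≤ C := by
  simpa using norm_integral_le_of_norm_le_const (μ := ρ) (f := φ) (ae_of_all _ hC)

/-- A martingale difference: `∫ φ d(κ ωᵢ)` is `𝔼[φ(ωᵢ₊₁) | ω₀, …, ωᵢ]`. -/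
noncomputable def markovIncrement (κ : X → Measure X) (φ : X → ℝ) (i : ℕ) (ω : ℕ → X) : ℝ :=
  φ (ω (i + 1)) - ∫ y, φ y ∂κ (ω i)

variable {κ : X → Measure X} {ℙ : Measure (ℕ → X)} {φ : X → ℝ} {C : ℝ}

lemma abs_sub_integral_le (hκ : ∀ x, IsProbabilityMeasure (κ x)) (hC : ∀ x, |φ x| ≤ C)
    (a b : X) : |φ a - ∫ y, φ y ∂κ b| ≤ 2 * C :=
  (abs_sub _ _).trans <| by linarith [hC a, abs_integral_le_of_abs_le (κ b) hC]

lemma measurable_markovIncrement (hφ : Measurable φ) (hTφ : Measurable fun x => ∫ y, φ y ∂κ x)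
    (i : ℕ) : Measurable (markovIncrement κ φ i) :=
  (hφ.comp (measurable_pi_apply _)).sub (hTφ.comp (measurable_pi_apply _))

lemma integral_markovIncrement_mul_eq_zero [IsFiniteMeasure ℙ] (hM : HasMarkovProperty κ ℙ)
    (hκ : ∀ x, IsProbabilityMeasure (κ x)) (hφ : Measurable φ)
    (hTφ : Measurable fun x => ∫ y, φ y ∂κ x) (hC : ∀ x, |φ x| ≤ C) {i j : ℕ} (hij : i < j) :
    ∫ ω, markovIncrement κ φ i ω * markovIncrement κ φ j ω ∂ℙ = 0 := by
  -- `markovIncrement κ φ i` depends only on `ω₀, …, ωⱼ`, so the Markov property at time `j` applies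
  set h : (Fin (j + 1) → X) → ℝ :=
    fun v => φ (v ⟨i + 1, by omega⟩) - ∫ y, φ y ∂κ (v ⟨i, by omega⟩)
  have hmarkov : ∫ ω, markovIncrement κ φ i ω * φ (ω (j + 1)) ∂ℙ
      = ∫ ω, markovIncrement κ φ i ω * ∫ y, φ y ∂κ (ω j) ∂ℙ :=
    hM j φ hφ ⟨C, hC⟩ h ((hφ.comp (measurable_pi_apply _)).sub (hTφ.comp (measurable_pi_apply _)))
      ⟨2 * C, fun v => abs_sub_integral_le hκ hC _ _⟩
  have hD : Integrable (markovIncrement κ φ i) ℙ :=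
    .of_bound (measurable_markovIncrement hφ hTφ i).aestronglyMeasurable (2 * C)
      (ae_of_all _ fun ω => abs_sub_integral_le hκ hC _ _)
  simp_rw [markovIncrement, mul_sub] at hmarkov ⊢
  rw [integral_sub, sub_eq_zero]
  · exact hmarkov
  · exact hD.mul_bdd (hφ.comp (measurable_pi_apply _)).aestronglyMeasurable (c := C)
      (ae_of_all _ fun _ => hC _)
  · exact hD.mul_bdd (hTφ.comp (measurable_pi_apply _)).aestronglyMeasurable (c := C)
      (ae_of_all _ fun _ => abs_integral_le_of_abs_le _ hC)

theorem ae_tendsto_avg_sub_integral [IsProbabilityMeasure ℙ] (hM : HasMarkovProperty κ ℙ)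
    (hκ : ∀ x, IsProbabilityMeasure (κ x)) (hφ : Measurable φ)
    (hTφ : Measurable fun x => ∫ y, φ y ∂κ x) (hC : ∀ x, |φ x| ≤ C) :
    ∀ᵐ ω ∂ℙ, Tendsto (fun n : ℕ => (n : ℝ)⁻¹ * ∑ i ∈ range n, (φ (ω i) - ∫ y, φ y ∂κ (ω i)))
      atTop (𝓝 0) := by
  filter_upwards [ae_tendsto_avg_of_orthogonal
    (fun i => (measurable_markovIncrement hφ hTφ i).aestronglyMeasurable)
    (fun i ω => abs_sub_integral_le hκ hC _ _)
    (fun i j => integral_markovIncrement_mul_eq_zero hM hκ hφ hTφ hC)] with ω hω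
  have hsplit : ∀ n, ∑ i ∈ range n, (φ (ω i) - ∫ y, φ y ∂κ (ω i))
      = ∑ i ∈ range n, markovIncrement κ φ i ω - (φ (ω n) - φ (ω 0)) := fun n => by
    rw [← sum_range_sub (fun i => φ (ω i)), ← sum_sub_distrib]
    simp only [markovIncrement]
    congr 1 with i
    ring
  have hedge : Tendsto (fun n : ℕ => (n : ℝ)⁻¹ * (φ (ω n) - φ (ω 0))) atTop (𝓝 0) :=
    tendsto_inv_atTop_nhds_zero_nat.zero_mul_isBoundedUnder_le <| isBoundedUnder_of
      ⟨2 * C, fun n => (abs_sub _ _).trans (by linarith [hC (ω n), hC (ω 0)])⟩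
  simpa [hsplit, mul_sub] using hω.sub hedge

end Markov

section Feller

variable {X : Type*} [MetricSpace X] [CompactSpace X] [MeasurableSpace X] [BorelSpace X]

lemma ContinuousMap.integrable (ρ : Measure X) [IsFiniteMeasure ρ] (φ : C(X, ℝ)) :
    Integrable φ ρ :=
  φ.continuous.integrable_of_hasCompactSupport (.of_compactSpace _)

lemma lipschitzWith_integral (ρ : Measure X) [IsProbabilityMeasure ρ] :
    LipschitzWith 1 fun φ : C(X, ℝ) => ∫ x, φ x ∂ρ := by
  refine LipschitzWith.of_dist_le_mul fun φ ψ => ?_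
  rw [NNReal.coe_one, one_mul, Real.dist_eq, ← integral_sub (φ.integrable ρ) (ψ.integrable ρ)]
  exact abs_integral_le_of_abs_le ρ fun x => ContinuousMap.dist_apply_le_dist (f := φ) (g := ψ) x

noncomputable def markovOperator (κ : X → Measure X)
    (hFeller : ∀ φ : X → ℝ, Continuous φ → Continuous fun x => ∫ y, φ y ∂κ x)
    (φ : C(X, ℝ)) : C(X, ℝ) :=
  ⟨fun x => ∫ y, φ y ∂κ x, hFeller φ φ.continuous⟩

variable {κ : X → Measure X}
  {hFeller : ∀ φ : X → ℝ, Continuous φ → Continuous fun x => ∫ y, φ y ∂κ x}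

lemma lipschitzWith_markovOperator (hκ : ∀ x, IsProbabilityMeasure (κ x)) :
    LipschitzWith 1 (markovOperator κ hFeller) :=
  LipschitzWith.of_dist_le_mul fun φ ψ => (ContinuousMap.dist_le (by positivity)).2 fun x =>
    (lipschitzWith_integral (κ x)).dist_le_mul φ ψ

lemma isClosed_setOf_integral_eq_integral_markovOperator (hκ : ∀ x, IsProbabilityMeasure (κ x))
    (ν : Measure X) [IsProbabilityMeasure ν] :
    IsClosed {φ : C(X, ℝ) | ∫ x, φ x ∂ν = ∫ x, markovOperator κ hFeller φ x ∂ν} :=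
  isClosed_eq (lipschitzWith_integral ν).continuous
    ((lipschitzWith_integral ν).comp (lipschitzWith_markovOperator hκ)).continuous

lemma bind_eq_self_of_integral_eq (hκm : Measurable κ) (hκ : ∀ x, IsProbabilityMeasure (κ x))
    (ν : Measure X) [IsProbabilityMeasure ν]
    (h : ∀ φ : C(X, ℝ), ∫ x, φ x ∂ν = ∫ x, markovOperator κ hFeller φ x ∂ν) :
    ν.bind κ = ν := by
  refine (ext_of_forall_lintegral_eq_of_IsFiniteMeasure fun f => ?_).symm
  set φ : C(X, ℝ) := ⟨fun x => (f x : ℝ), NNReal.continuous_coe.comp f.continuous⟩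
  have hinner : ∀ x, ∫⁻ y, f y ∂κ x = ENNReal.ofReal (markovOperator κ hFeller φ x) :=
    fun x => lintegral_coe_eq_integral _ (φ.integrable (κ x))
  rw [Measure.lintegral_bind hκm.aemeasurable f.measurable_coe_ennreal_comp.aemeasurable,
    lintegral_coe_eq_integral _ (φ.integrable ν)]
  simp_rw [hinner]
  rw [← ofReal_integral_eq_lintegral_ofReal ((markovOperator κ hFeller φ).integrable ν)
    (ae_of_all _ fun x => integral_nonneg fun y => (f y).2)]
  exact congrArg ENNReal.ofReal (h φ)

end Feller

theorem stmt_8_general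
    {X : Type*} [MetricSpace X] [CompactSpace X]
    [MeasurableSpace X] [BorelSpace X]
    (κ : X → Measure X) (hκp : ∀ x, IsProbabilityMeasure (κ x))
    (hκm : ∀ A : Set X, MeasurableSet A → Measurable fun x => κ x A)
    (hFeller : ∀ φ : X → ℝ, Continuous φ → Continuous fun x => ∫ y, φ y ∂ κ x)
    (ℙ : Measure (ℕ → X)) [IsProbabilityMeasure ℙ]
    (hMarkov : ∀ n : ℕ, ∀ g : X → ℝ, Measurable g → (∃ M, ∀ x, |g x| ≤ M) →
      ∀ h : (Fin (n + 1) → X) → ℝ, Measurable h → (∃ M, ∀ v, |h v| ≤ M) →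
      ∫ ω, h (fun i => ω i.1) * g (ω (n + 1)) ∂ℙ
        = ∫ ω, h (fun i => ω i.1) * (∫ y, g y ∂ κ (ω n)) ∂ℙ) :
    ∀ᵐ ω ∂ℙ, ∀ nk : ℕ → ℕ, StrictMono nk →
      ∀ ν : Measure X, IsProbabilityMeasure ν →
      (∀ φ : X → ℝ, Continuous φ →
        Tendsto (fun k : ℕ => ((nk k : ℝ))⁻¹ * ∑ i ∈ Finset.range (nk k), φ (ω i))
          atTop (nhds (∫ x, φ x ∂ν))) →
      ∀ A : Set X, MeasurableSet A → ∫⁻ x, κ x A ∂ν = ν A := by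
  have hκ : Measurable κ := Measure.measurable_of_measurable_coe κ hκm
  obtain ⟨S, hS, hdense⟩ := TopologicalSpace.exists_countable_dense C(X, ℝ)
  have hae : ∀ᵐ ω ∂ℙ, ∀ φ ∈ S, Tendsto (fun n : ℕ => (n : ℝ)⁻¹ *
      ∑ i ∈ range n, (φ (ω i) - markovOperator κ hFeller φ (ω i))) atTop (𝓝 0) :=
    (ae_ball_iff hS).2 fun φ _ => ae_tendsto_avg_sub_integral hMarkov hκp
      φ.continuous.measurable (hFeller φ φ.continuous).measurable
      fun x => (φ.norm_coe_le_norm x).trans_eq' rfl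
  filter_upwards [hae] with ω hω nk hnk ν hν hconv A hA
  have hS_stat : S ⊆ {φ | ∫ x, φ x ∂ν = ∫ x, markovOperator κ hFeller φ x ∂ν} := fun φ hφ =>
    eq_of_tendsto_avg_sub hnk (hconv φ φ.continuous)
      (hconv _ (markovOperator κ hFeller φ).continuous) (hω φ hφ)
  have hstat := (isClosed_setOf_integral_eq_integral_markovOperator hκp ν).closure_subset_iff.2
    hS_stat
  rw [← Measure.bind_apply hA hκ.aemeasurable,
    bind_eq_self_of_integral_eq hκ hκp ν fun φ => hstat (hdense.closure_eq ▸ Set.mem_univ φ)]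

/-- Breiman-type ergodic theorem: for a Feller Markov chain on a compact metric
space, almost surely every weak-* accumulation point of the empirical measures
is a stationary measure. -/
theorem stmt_8
    {X : Type*} [MetricSpace X] [CompactSpace X]
    [MeasurableSpace X] [BorelSpace X]
    (κ : X → Measure X) (hκp : ∀ x, IsProbabilityMeasure (κ x))
    (hκm : ∀ A : Set X, MeasurableSet A → Measurable fun x => κ x A)
    (hFeller : ∀ φ : X → ℝ, Continuous φ → Continuous fun x => ∫ y, φ y ∂ κ x)
    (μ : Measure X) [IsProbabilityMeasure μ]
    (ℙ : Measure (ℕ → X)) [IsProbabilityMeasure ℙ]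
    (h0 : Measure.map (fun ω => ω 0) ℙ = μ)
    (hMarkov : ∀ n : ℕ, ∀ g : X → ℝ, Measurable g → (∃ M, ∀ x, |g x| ≤ M) →
      ∀ h : (Fin (n + 1) → X) → ℝ, Measurable h → (∃ M, ∀ v, |h v| ≤ M) →
      ∫ ω, h (fun i => ω i.1) * g (ω (n + 1)) ∂ℙ
        = ∫ ω, h (fun i => ω i.1) * (∫ y, g y ∂ κ (ω n)) ∂ℙ) :
    ∀ᵐ ω ∂ℙ, ∀ nk : ℕ → ℕ, StrictMono nk →
      ∀ ν : Measure X, IsProbabilityMeasure ν →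
      (∀ φ : X → ℝ, Continuous φ →
        Tendsto (fun k : ℕ => ((nk k : ℝ))⁻¹ * ∑ i ∈ Finset.range (nk k), φ (ω i))
          atTop (nhds (∫ x, φ x ∂ν))) →
      ∀ A : Set X, MeasurableSet A → ∫⁻ x, κ x A ∂ν = ν A :=
  stmt_8_general κ hκp hκm hFeller ℙ hMarkov
end

section
/- Let E be a complete separable metric space and X = E^ℕ with metric d(x,y) = Σ_{n=1}^∞ 2^{-n} min(d_E(x_n,y_n),1), with shift σ(x) = (x_2, x_3, …). Fix ε > 2 and r_0 > e, and suppose f : X → ℝ is bounded and satisfies |f(x) − f(y)| ≤ H (log(r_0/d(x,y)))^{-ε} for some H > 0 and all x ≠ y. Then there exists C > 0 such that for every n ≥ 1, every (a_1, …, a_n) ∈ E^n and all x ≠ y in X, |Σ_{j=0}^{n−1} [f(σ^j(a_1⋯a_n·x)) − f(σ^j(a_1⋯a_n·y))]| ≤ C (log(r_0/d(x,y)))^{-(ε−1)}, where a_1⋯a_n·x = (a_1, …, a_n, x_1, x_2, …). In particular f ∈ C^{(ε−1) log}(X, ℝ) and f is flat with respect to the natural coupling and the modulus ω_{ε−1}.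 -/
open MeasureTheory

/-- The metric `d(x,y) = Σ_{n≥1} 2⁻ⁿ min(d_E(x_n,y_n),1)` on the shift space. -/
noncomputable def seqDist {E : Type*} [PseudoMetricSpace E] (x y : ℕ → E) : ℝ :=
  ∑' n : ℕ, (1 / 2 : ℝ) ^ (n + 1) * min (dist (x n) (y n)) 1

/-- Prepending the word `(a 0, …, a (n-1))` to the sequence `x`. -/
def prepSeq {E : Type*} (a : ℕ → E) (n : ℕ) (x : ℕ → E) : ℕ → E :=
  fun k => if k < n then a k else x (k - n)

/-- The left shift on sequences. -/
def shiftSeq {E : Type*} (x : ℕ → E) : ℕ → E := fun k => x (k + 1)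

/-- Extension of a finite word to an infinite sequence of symbols (junk value
`x 0` beyond the word). -/
def extWord {E : Type*} (n : ℕ) (w : Fin n → E) (x : ℕ → E) : ℕ → E :=
  fun i => if h : i < n then w ⟨i, h⟩ else x 0

section Aux

variable {E : Type*} [PseudoMetricSpace E]

lemma geom_half_summable : Summable (fun n : ℕ => (1 / 2 : ℝ) ^ (n + 1)) := by
  have h := (summable_geometric_of_lt_one (by norm_num : (0:ℝ) ≤ 1/2)
    (by norm_num : (1/2:ℝ) < 1)).mul_right (1/2)
  refine h.congr (fun n => ?_)
  rw [pow_succ]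

lemma seqDist_summable (x y : ℕ → E) :
    Summable (fun n => (1 / 2 : ℝ) ^ (n + 1) * min (dist (x n) (y n)) 1) := by
  apply geom_half_summable.of_nonneg_of_le (fun n => by positivity)
  intro n
  have h2 : min (dist (x n) (y n)) 1 ≤ 1 := min_le_right _ _
  have h3 : (0:ℝ) ≤ (1/2:ℝ)^(n+1) := by positivity
  nlinarith

lemma seqDist_nonneg (x y : ℕ → E) : 0 ≤ seqDist x y :=
  tsum_nonneg (fun n => by positivity)

lemma seqDist_le_one (x y : ℕ → E) : seqDist x y ≤ 1 := by
  have h1 : seqDist x y ≤ ∑' n : ℕ, (1 / 2 : ℝ) ^ (n + 1) := by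
    refine Summable.tsum_le_tsum (fun n => ?_) (seqDist_summable x y) geom_half_summable
    have h2 : min (dist (x n) (y n)) 1 ≤ 1 := min_le_right _ _
    have h3 : (0:ℝ) ≤ (1/2:ℝ)^(n+1) := by positivity
    nlinarith
  have h2 : ∑' n : ℕ, (1 / 2 : ℝ) ^ (n + 1) = 1 := by
    rw [show (fun n : ℕ => (1 / 2 : ℝ) ^ (n + 1)) = fun n : ℕ => (1/2:ℝ)^n * (1/2) from
      funext fun n => by ring, tsum_mul_right,
      tsum_geometric_of_lt_one (by norm_num) (by norm_num)]
    norm_num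
  linarith

lemma seqDist_self (x : ℕ → E) : seqDist x x = 0 := by
  simp [seqDist]

lemma seqDist_pos {F : Type*} [MetricSpace F] {x y : ℕ → F} (hxy : x ≠ y) :
    0 < seqDist x y := by
  obtain ⟨n, hn⟩ := Function.ne_iff.mp hxy
  refine Summable.tsum_pos (seqDist_summable x y) (fun i => by positivity) n ?_
  have h1 : 0 < dist (x n) (y n) := dist_pos.mpr hn
  have h2 : 0 < min (dist (x n) (y n)) 1 := lt_min h1 one_pos
  positivity

lemma shiftSeq_iterate (j : ℕ) (z : ℕ → E) : shiftSeq^[j] z = fun k => z (k + j) := by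
  induction j generalizing z with
  | zero => simp
  | succ j ih =>
    rw [Function.iterate_succ, Function.comp_apply, ih]
    rfl

lemma shift_prep (w : ℕ → E) (n j : ℕ) (hj : j ≤ n) (x : ℕ → E) :
    shiftSeq^[j] (prepSeq w n x) = prepSeq (fun k => w (k + j)) (n - j) x := by
  rw [shiftSeq_iterate]
  funext k
  simp only [prepSeq]
  by_cases h : k < n - j
  · rw [if_pos (by omega), if_pos h]
  · rw [if_neg (by omega), if_neg h]
    congr 1
    omega

lemma seqDist_prepSeq (w : ℕ → E) (m : ℕ) (x y : ℕ → E) :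
    seqDist (prepSeq w m x) (prepSeq w m y) = (1 / 2 : ℝ) ^ m * seqDist x y := by
  unfold seqDist
  rw [← tsum_mul_left]
  set g : ℕ → ℝ := fun k =>
    (1 / 2 : ℝ) ^ (k + 1) * min (dist (prepSeq w m x k) (prepSeq w m y k)) 1 with hg
  have hinj : Function.Injective (fun i : ℕ => i + m) := add_left_injective m
  have hsupp : Function.support g ⊆ Set.range (fun i : ℕ => i + m) := by
    intro k hk
    by_contra hr
    have hkm : k < m := by
      by_contra h
      exact hr ⟨k - m, show k - m + m = k by omega⟩
    apply hk
    simp only [g, prepSeq, if_pos hkm, dist_self]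
    simp
  rw [← hinj.tsum_eq hsupp]
  refine tsum_congr (fun i => ?_)
  show (1 / 2 : ℝ) ^ (i + m + 1) * min (dist (prepSeq w m x (i + m)) (prepSeq w m y (i + m))) 1
    = (1 / 2 : ℝ) ^ m * ((1 / 2 : ℝ) ^ (i + 1) * min (dist (x i) (y i)) 1)
  have h1 : ¬ (i + m < m) := by omega
  simp only [prepSeq, if_neg h1]
  have h2 : i + m - m = i := by omega
  rw [h2]
  ring

lemma bernoulli_step {q a h : ℝ} (hq : 1 ≤ q) (ha : 0 < a) (hh : 0 ≤ h) :
    q * h * (a + h) ^ (-(q + 1)) ≤ a ^ (-q) - (a + h) ^ (-q) := by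
  set b := a + h with hb
  have hb0 : 0 < b := by simp only [hb]; linarith
  have hab : a ≤ b := by simp only [hb]; linarith
  have key : 1 + q * (h / a) ≤ (1 + h / a) ^ q := by
    refine one_add_mul_self_le_rpow_one_add ?_ hq
    have : 0 ≤ h / a := div_nonneg hh ha.le
    linarith
  have h1 : (1:ℝ) + h / a = b / a := by
    rw [hb]
    field_simp
  have h2 : h / b ≤ h / a := div_le_div_of_nonneg_left hh ha hab
  have h3 : 1 + q * (h / b) ≤ (b / a) ^ q := by
    rw [← h1]
    refine le_trans ?_ key
    have : q * (h / b) ≤ q * (h / a) := mul_le_mul_of_nonneg_left h2 (by linarith)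
    linarith
  have hbq : (0:ℝ) < b ^ (-q) := Real.rpow_pos_of_pos hb0 _
  have h4 : (1 + q * (h / b)) * b ^ (-q) ≤ (b / a) ^ q * b ^ (-q) :=
    mul_le_mul_of_nonneg_right h3 hbq.le
  have h5 : (b / a) ^ q * b ^ (-q) = a ^ (-q) := by
    rw [Real.rpow_neg hb0.le, ← Real.inv_rpow hb0.le,
      ← Real.mul_rpow (by positivity) (by positivity),
      show b / a * b⁻¹ = a⁻¹ by field_simp [mul_comm],
      Real.inv_rpow ha.le, ← Real.rpow_neg ha.le]
  have h6 : (1 + q * (h / b)) * b ^ (-q) = b ^ (-q) + q * h * b ^ (-(q + 1)) := by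
    have he : b ^ (-(q + 1)) = b ^ (-q) * b⁻¹ := by
      rw [show -(q + 1) = -q + (-1) by ring, Real.rpow_add hb0, Real.rpow_neg_one]
    rw [he, div_eq_mul_inv]
    ring
  rw [h5, h6] at h4
  linarith

lemma tele_sum {ε L c : ℝ} (hε : 2 ≤ ε) (hL : 0 < L) (hc : 0 < c) (n : ℕ) :
    ∑ m ∈ Finset.range n, (L + ((m : ℝ) + 1) * c) ^ (-ε)
      ≤ L ^ (-(ε - 1)) / ((ε - 1) * c) := by
  set q := ε - 1 with hqdef
  have hq : 1 ≤ q := by simp only [hqdef]; linarith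
  have hqc : 0 < q * c := by positivity
  set g : ℕ → ℝ := fun m => (L + (m : ℝ) * c) ^ (-q) with hg
  have hterm : ∀ m : ℕ, (L + ((m : ℝ) + 1) * c) ^ (-ε) ≤ (g m - g (m + 1)) / (q * c) := by
    intro m
    have ha : 0 < L + (m : ℝ) * c := by positivity
    have hb := bernoulli_step hq ha hc.le
    rw [le_div_iff₀ hqc]
    have he1 : L + (m : ℝ) * c + c = L + ((m : ℝ) + 1) * c := by ring
    have he2 : (((m + 1 : ℕ)) : ℝ) = (m : ℝ) + 1 := by push_cast; ring
    have he3 : -ε = -(q + 1) := by simp only [hqdef]; ring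
    rw [he1] at hb
    simp only [hg, he2, he3]
    calc (L + ((m:ℝ) + 1) * c) ^ (-(q+1)) * (q * c)
        = q * c * (L + ((m:ℝ) + 1) * c) ^ (-(q+1)) := by ring
      _ ≤ (L + (m:ℝ) * c) ^ (-q) - (L + ((m:ℝ) + 1) * c) ^ (-q) := hb
  calc ∑ m ∈ Finset.range n, (L + ((m : ℝ) + 1) * c) ^ (-ε)
      ≤ ∑ m ∈ Finset.range n, (g m - g (m + 1)) / (q * c) :=
        Finset.sum_le_sum (fun m _ => hterm m)
    _ = (g 0 - g n) / (q * c) := by rw [← Finset.sum_div, Finset.sum_range_sub']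
    _ ≤ L ^ (-q) / (q * c) := by
        have hg0 : g 0 = L ^ (-q) := by simp [hg]
        have hgn : 0 < g n := Real.rpow_pos_of_pos (by positivity) _
        gcongr
        linarith [hg0.le, hg0.ge]
    _ = L ^ (-(ε - 1)) / ((ε - 1) * c) := by rw [hqdef]

end Aux

/-- An `ω_ε`-Hölder potential with `ε > 2` has `ω_{ε−1}`-flat Birkhoff sums
along the natural coupling, and belongs to `C^{(ε−1) log}`. -/
theorem stmt_13
    {E : Type*} [MetricSpace E] [CompleteSpace E]
    [TopologicalSpace.SeparableSpace E]
    (ε r0 : ℝ) (hε : 2 < ε) (hr0 : Real.exp 1 < r0)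
    (f : (ℕ → E) → ℝ) (hfb : ∃ M, ∀ x, |f x| ≤ M)
    (H : ℝ) (hH : 0 < H)
    (hHol : ∀ x y : ℕ → E, x ≠ y →
      |f x - f y| ≤ H * (Real.log (r0 / seqDist x y)) ^ (-ε)) :
    (∃ C > (0 : ℝ), ∀ n : ℕ, 1 ≤ n → ∀ a : Fin n → E, ∀ x y : ℕ → E, x ≠ y →
      |∑ j ∈ Finset.range n,
          (f (shiftSeq^[j] (prepSeq (extWord n a x) n x))
            - f (shiftSeq^[j] (prepSeq (extWord n a x) n y)))|
        ≤ C * (Real.log (r0 / seqDist x y)) ^ (-(ε - 1))) ∧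
    (∃ C > (0 : ℝ), ∀ x y : ℕ → E, x ≠ y →
      |f x - f y| ≤ C * (Real.log (r0 / seqDist x y)) ^ (-(ε - 1))) := by
  have hr0pos : (0:ℝ) < r0 := lt_trans (Real.exp_pos 1) hr0
  have hlog2 : (0:ℝ) < Real.log 2 := Real.log_pos one_lt_two
  have hlogr0 : 1 < Real.log r0 := by
    have := Real.log_lt_log (Real.exp_pos 1) hr0
    rwa [Real.log_exp] at this
  have hLfact : ∀ x y : ℕ → E, x ≠ y → 1 < Real.log (r0 / seqDist x y) := by
    intro x y hxy
    have hd : 0 < seqDist x y := seqDist_pos hxy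
    have hd1 : seqDist x y ≤ 1 := seqDist_le_one x y
    have h1 : r0 ≤ r0 / seqDist x y := by
      rw [le_div_iff₀ hd]
      nlinarith
    have h2 : Real.log r0 ≤ Real.log (r0 / seqDist x y) :=
      Real.log_le_log hr0pos h1
    linarith
  constructor
  · -- flatness of Birkhoff sums
    have hC : (0:ℝ) < H / ((ε - 1) * Real.log 2) := by
      have h1 : (0:ℝ) < ε - 1 := by linarith
      positivity
    refine ⟨H / ((ε - 1) * Real.log 2), hC, ?_⟩
    intro n hn a x y hxy
    have hd : 0 < seqDist x y := seqDist_pos hxy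
    have hd1 : seqDist x y ≤ 1 := seqDist_le_one x y
    set L := Real.log (r0 / seqDist x y) with hLdef
    have hL : 1 < L := hLfact x y hxy
    set w : ℕ → E := extWord n a x with hw
    have hterm : ∀ j ∈ Finset.range n,
        |f (shiftSeq^[j] (prepSeq w n x)) - f (shiftSeq^[j] (prepSeq w n y))|
          ≤ H * (L + ((n - j : ℕ) : ℝ) * Real.log 2) ^ (-ε) := by
      intro j hj
      have hjn : j ≤ n := le_of_lt (Finset.mem_range.mp hj)
      rw [shift_prep w n j hjn x, shift_prep w n j hjn y]
      set w' : ℕ → E := fun k => w (k + j) with hw'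
      have hdist : seqDist (prepSeq w' (n - j) x) (prepSeq w' (n - j) y)
          = (1/2:ℝ) ^ (n - j) * seqDist x y := seqDist_prepSeq w' (n - j) x y
      have hdpos : 0 < (1/2:ℝ) ^ (n - j) * seqDist x y :=
        mul_pos (pow_pos (by norm_num) _) hd
      have hne : prepSeq w' (n - j) x ≠ prepSeq w' (n - j) y := by
        intro hcontra
        rw [hcontra, seqDist_self] at hdist
        nlinarith
      have hb := hHol _ _ hne
      rw [hdist] at hb
      have hlogeq : Real.log (r0 / ((1/2:ℝ) ^ (n - j) * seqDist x y))
          = L + ((n - j : ℕ) : ℝ) * Real.log 2 := by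
        have harg : r0 / ((1/2:ℝ) ^ (n - j) * seqDist x y)
            = (r0 / seqDist x y) * (2:ℝ) ^ (n - j) := by
          rw [one_div, inv_pow]
          field_simp
        rw [harg, Real.log_mul (by positivity) (by positivity), Real.log_pow, hLdef]
      rw [hlogeq] at hb
      exact hb
    have hsum1 : |∑ j ∈ Finset.range n,
        (f (shiftSeq^[j] (prepSeq w n x)) - f (shiftSeq^[j] (prepSeq w n y)))|
        ≤ ∑ j ∈ Finset.range n, H * (L + ((n - j : ℕ) : ℝ) * Real.log 2) ^ (-ε) :=
      le_trans (Finset.abs_sum_le_sum_abs _ _) (Finset.sum_le_sum hterm)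
    have hreflect : ∑ j ∈ Finset.range n, H * (L + ((n - j : ℕ) : ℝ) * Real.log 2) ^ (-ε)
        = ∑ m ∈ Finset.range n, H * (L + ((m : ℝ) + 1) * Real.log 2) ^ (-ε) := by
      rw [← Finset.sum_range_reflect (fun m => H * (L + ((m : ℝ) + 1) * Real.log 2) ^ (-ε)) n]
      refine Finset.sum_congr rfl (fun j hj => ?_)
      have hjn : j < n := Finset.mem_range.mp hj
      have hcast : ((n - j : ℕ) : ℝ) = ((n - 1 - j : ℕ) : ℝ) + 1 := by
        have h : n - j = (n - 1 - j) + 1 := by omega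
        rw [h]
        push_cast
        ring
      rw [hcast]
    have htele : ∑ m ∈ Finset.range n, (L + ((m : ℝ) + 1) * Real.log 2) ^ (-ε)
        ≤ L ^ (-(ε - 1)) / ((ε - 1) * Real.log 2) :=
      tele_sum (le_of_lt hε) (by linarith) hlog2 n
    calc |∑ j ∈ Finset.range n,
        (f (shiftSeq^[j] (prepSeq w n x)) - f (shiftSeq^[j] (prepSeq w n y)))|
        ≤ ∑ j ∈ Finset.range n, H * (L + ((n - j : ℕ) : ℝ) * Real.log 2) ^ (-ε) := hsum1
      _ = H * ∑ m ∈ Finset.range n, (L + ((m : ℝ) + 1) * Real.log 2) ^ (-ε) := by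
          rw [hreflect, Finset.mul_sum]
      _ ≤ H * (L ^ (-(ε - 1)) / ((ε - 1) * Real.log 2)) :=
          mul_le_mul_of_nonneg_left htele hH.le
      _ = H / ((ε - 1) * Real.log 2) * L ^ (-(ε - 1)) := by ring
  · -- membership in C^{(ε−1) log}
    refine ⟨H, hH, ?_⟩
    intro x y hxy
    have hL : 1 < Real.log (r0 / seqDist x y) := hLfact x y hxy
    have h1 := hHol x y hxy
    have h2 : (Real.log (r0 / seqDist x y)) ^ (-ε)
        ≤ (Real.log (r0 / seqDist x y)) ^ (-(ε - 1)) :=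
      Real.rpow_le_rpow_of_exponent_le hL.le (by linarith)
    calc |f x - f y| ≤ H * (Real.log (r0 / seqDist x y)) ^ (-ε) := h1
      _ ≤ H * (Real.log (r0 / seqDist x y)) ^ (-(ε - 1)) :=
          mul_le_mul_of_nonneg_left h2 hH.le
end

section
/- Let (X, d) be a complete separable metric space with finite diameter, (m_x)_{x∈X} a Markov transition probability kernel on X, ω a modulus of continuity, and f : X → ℝ a bounded ω-Hölder function that is flat with respect to some coupling of the kernel: there exist measurable families of probability measures Π^n_{x,y} on X^n × X^n with marginals m^n_x and m^n_y and a constant C > 0 such that for all n, x, y and Π^n_{x,y}-almost every (x̄, ȳ), |f^n(x̄) − f^n(ȳ)| ≤ C ω(d(x,y)). Let Lφ(x) = ∫_X e^{f(y)} φ(y) dm_x(y) and let ϱ = limsup_{n→∞} (L^n 1(x))^{1/n} (which is finite, positive, and independent of x). Then there exist constants 0 < A ≤ B and a bounded ω-Hölder function h : X → ℝ with A ≤ h(x) ≤ B for all x ∈ X and L h = ϱ h. -/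
/-!
Flatness of `f` along the coupling gives a Harnack inequality
`Lⁿ1(x) ≤ exp (C ω(d(x, y))) Lⁿ1(y)`, uniform in `n`. Since the diameter is finite, this makes
`n ↦ Lⁿ1(x)` multiplicative up to a bounded factor, so by Fekete's lemma `Lⁿ1(x)` is comparable
to `ϱⁿ`. The normalised iterates `ϱ⁻ⁿ Lⁿ1` are therefore bounded above and below and uniformly
`ω`-Hölder; their Cesàro averages are almost fixed by `ϱ⁻¹ L`, and a pointwise limit along a
subsequence (extracted on a countable dense set and spread by equicontinuity) is the eigenfunction,
the eigen-equation passing to the limit by dominated convergence.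
-/

open MeasureTheory Filter
open scoped ENNReal

/-- The law on `Xⁿ` of the first `n` steps of the Markov chain with kernel `m`
started at `x`. -/
noncomputable def pathLaw {X : Type*} [MeasurableSpace X] (m : X → Measure X) :
    (n : ℕ) → X → Measure (Fin n → X)
  | 0, _ => Measure.dirac (fun i => i.elim0)
  | n + 1, x => (m x).bind fun y => (pathLaw m n y).map (Fin.cons y)

open Topology Set Real ProbabilityTheory
open scoped BigOperators

namespace Subadditive

variable {u v : ℕ → ℝ}

theorem nonneg_zero (hu : Subadditive u) : 0 ≤ u 0 := by
  simpa using hu 0 0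

theorem bddBelow_range_div_of_add_nonneg (hv : Subadditive v)
    (huv : ∀ n, 0 ≤ u n + v n) : BddBelow (range fun n : ℕ => u n / n) := by
  refine ⟨-(|v 1| + v 0), ?_⟩
  rintro _ ⟨n, rfl⟩
  rcases Nat.eq_zero_or_pos n with rfl | hn
  · simpa using by linarith [abs_nonneg (v 1), hv.nonneg_zero]
  · have hn' : (1 : ℝ) ≤ n := by exact_mod_cast hn
    have hvn : v n ≤ n * v 1 + v 0 := by simpa using hv.apply_mul_add_le n 1 0
    rw [le_div_iff₀ (by positivity)]
    nlinarith [huv n, le_abs_self (v 1), neg_abs_le (v 1), hv.nonneg_zero]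

theorem lim_mul_le (hu : Subadditive u) (hbdd : BddBelow (range fun n : ℕ => u n / n)) (n : ℕ) :
    hu.lim * n ≤ u n := by
  rcases Nat.eq_zero_or_pos n with rfl | hn
  · simpa using hu.nonneg_zero
  · exact (le_div_iff₀ (by exact_mod_cast hn)).mp (hu.lim_le_div hbdd hn.ne')

end Subadditive

theorem exists_pow_bounds_of_quasiMultiplicative {g : ℕ → ℝ} {K : ℝ} (hg : ∀ n, 0 < g n)
    (hsub : ∀ n k, g (n + k) ≤ K * (g n * g k)) (hsup : ∀ n k, g n * g k ≤ K * g (n + k)) :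
    ∃ r > 0, Tendsto (fun n : ℕ => g n ^ (1 / n : ℝ)) atTop (𝓝 r) ∧
      ∀ n, r ^ n ≤ K * g n ∧ g n ≤ K * r ^ n := by
  have hK : 0 < K := pos_of_mul_pos_left ((mul_pos (hg 0) (hg 0)).trans_le (hsup 0 0)) (hg 0).le
  set u : ℕ → ℝ := fun n => log K + log (g n)
  set v : ℕ → ℝ := fun n => log K - log (g n)
  have hu : Subadditive u := fun n k => by
    have := log_le_log (hg _) (hsub n k)
    rw [log_mul hK.ne' (mul_pos (hg n) (hg k)).ne', log_mul (hg n).ne' (hg k).ne'] at this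
    simp only [u]; linarith
  have hv : Subadditive v := fun n k => by
    have := log_le_log (mul_pos (hg n) (hg k)) (hsup n k)
    rw [log_mul hK.ne' (hg _).ne', log_mul (hg n).ne' (hg k).ne'] at this
    simp only [v]; linarith
  have hlogK : 0 ≤ log K := by linarith [hu.nonneg_zero, hv.nonneg_zero]
  have huv : ∀ n, 0 ≤ u n + v n := fun n => by simp only [u, v]; linarith
  have hubdd := hv.bddBelow_range_div_of_add_nonneg huv
  have hvbdd := hu.bddBelow_range_div_of_add_nonneg (u := v) fun n => by linarith [huv n]
  have hK_div : Tendsto (fun n : ℕ => log K / n) atTop (𝓝 0) :=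
    tendsto_const_div_atTop_nhds_zero_nat _
  have hlog : Tendsto (fun n : ℕ => log (g n) / n) atTop (𝓝 hu.lim) := by
    simpa [u, add_div] using (hu.tendsto_lim hubdd).sub hK_div
  have hvlim : hv.lim = -hu.lim := tendsto_nhds_unique (hv.tendsto_lim hvbdd) <| by
    simpa [v, sub_div] using hK_div.sub hlog
  refine ⟨exp hu.lim, exp_pos _, ?_, fun n => ⟨?_, ?_⟩⟩
  · refine ((continuous_exp.tendsto _).comp hlog).congr fun n => ?_
    rw [Function.comp_apply, rpow_def_of_pos (hg n), mul_one_div]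
  · have := hu.lim_mul_le hubdd n
    calc exp hu.lim ^ n = exp (hu.lim * n) := by rw [← exp_nat_mul, mul_comm]
      _ ≤ exp (u n) := exp_le_exp.mpr this
      _ = K * g n := by simp only [u]; rw [exp_add, exp_log hK, exp_log (hg n)]
  · have := hv.lim_mul_le hvbdd n
    rw [hvlim] at this
    calc g n = exp (log (g n)) := (exp_log (hg n)).symm
      _ ≤ exp (log K + hu.lim * n) := exp_le_exp.mpr (by simp only [v] at this; linarith)
      _ = K * exp hu.lim ^ n := by rw [exp_add, exp_log hK, ← exp_nat_mul, mul_comm (n : ℝ)]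

theorem limsup_ofReal_rpow_eq {g : ℕ → ℝ} {r : ℝ} (hg : ∀ n, 0 ≤ g n)
    (h : Tendsto (fun n : ℕ => g n ^ (1 / n : ℝ)) atTop (𝓝 r)) :
    limsup (fun n : ℕ => ENNReal.ofReal (g n) ^ ((1 : ℝ) / n)) atTop = ENNReal.ofReal r := by
  refine ((ENNReal.tendsto_ofReal h).congr fun n => ?_).limsup_eq
  exact (ENNReal.ofReal_rpow_of_nonneg (hg n) (by positivity)).symm

theorem equicontinuous_of_abs_sub_le {ι β : Type*} [PseudoMetricSpace β] {F : ι → β → ℝ}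
    {b : ℝ → ℝ} (hb : Tendsto b (𝓝[≥] 0) (𝓝 0)) (H : ∀ i x y, |F i x - F i y| ≤ b (dist x y)) :
    Equicontinuous F := by
  refine Metric.equicontinuous_of_continuity_modulus (fun t => b |t|) ?_ F
    fun x y i => by simpa [Real.dist_eq] using H i x y
  refine hb.comp (tendsto_nhdsWithin_of_tendsto_nhds_of_eventually_within _ ?_ ?_)
  · simpa using (continuous_abs.tendsto (0 : ℝ))
  · exact Eventually.of_forall fun t => abs_nonneg t

theorem Equicontinuous.exists_tendsto_subseq {X : Type*} [TopologicalSpace X]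
    [TopologicalSpace.SeparableSpace X] {F : ℕ → X → ℝ} (hF : Equicontinuous F) {a b : ℝ}
    (hab : ∀ n x, F n x ∈ Icc a b) :
    ∃ (φ : ℕ → ℕ) (h : X → ℝ), StrictMono φ ∧
      ∀ x, Tendsto (fun n => F (φ n) x) atTop (𝓝 (h x)) := by
  rcases isEmpty_or_nonempty X with hX | hX
  · exact ⟨id, isEmptyElim, strictMono_id, isEmptyElim⟩
  obtain ⟨u, hu⟩ := TopologicalSpace.exists_dense_seq X
  obtain ⟨z, -, φ, hφ, hz⟩ := (isCompact_univ_pi fun _ : ℕ => isCompact_Icc (a := a) (b := b))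
    |>.tendsto_subseq (x := fun n i => F n (u i)) fun n i _ => hab n (u i)
  suffices ∀ x, CauchySeq fun n => F (φ n) x from
    ⟨φ, fun x => (cauchySeq_tendsto_of_complete (this x)).choose, hφ,
      fun x => (cauchySeq_tendsto_of_complete (this x)).choose_spec⟩
  intro x
  rw [Metric.cauchySeq_iff']
  intro ε hε
  obtain ⟨_, hxy, i, rfl⟩ := ((Metric.equicontinuousAt_iff_right.mp (hF x) (ε / 3)
    (by positivity)).and_frequently (mem_closure_iff_frequently.mp (hu x))).exists
  obtain ⟨N, hN⟩ := Metric.cauchySeq_iff'.mp (tendsto_pi_nhds.mp hz i).cauchySeq (ε / 3)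
    (by positivity)
  refine ⟨N, fun n hn => ?_⟩
  calc dist (F (φ n) x) (F (φ N) x)
      ≤ dist (F (φ n) x) (F (φ n) (u i)) + dist (F (φ N) x) (F (φ N) (u i))
        + dist (F (φ n) (u i)) (F (φ N) (u i)) := dist_triangle4_right _ _ _ _
    _ < ε / 3 + ε / 3 + ε / 3 := by gcongr <;> [exact hxy _; exact hxy _; exact hN n hn]
    _ = ε := by ring

theorem norm_exp_mul_le {a b M B : ℝ} (ha : a ≤ M) (hb : |b| ≤ B) : ‖exp a * b‖ ≤ exp M * B := by
  rw [norm_mul, norm_of_nonneg (exp_pos _).le]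
  exact mul_le_mul (exp_le_exp.mpr ha) hb (norm_nonneg _) (exp_pos M).le

theorem abs_sub_le_of_le_exp_mul {a b t K : ℝ} (ht : 0 ≤ t) (htK : exp t ≤ K)
    (ha : a ∈ Icc 0 K) (hb : b ∈ Icc 0 K) (hab : a ≤ exp t * b) (hba : b ≤ exp t * a) :
    |a - b| ≤ K * K * t := by
  have hexp : exp t - 1 ≤ t * K := by
    have hinv : exp (-t) * exp t = 1 := by rw [← exp_add, neg_add_cancel, exp_zero]
    nlinarith [mul_le_mul_of_nonneg_right (add_one_le_exp (-t)) (exp_pos t).le]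
  have key {a b : ℝ} (hb : b ∈ Icc 0 K) (h : a ≤ exp t * b) : a - b ≤ K * K * t :=
    calc a - b ≤ (exp t - 1) * b := by linarith
      _ ≤ t * K * b := mul_le_mul_of_nonneg_right hexp hb.1
      _ ≤ t * K * K := mul_le_mul_of_nonneg_left hb.2 (mul_nonneg ht (hb.1.trans hb.2))
      _ = K * K * t := by ring
  exact abs_sub_le_iff.mpr ⟨key hb hab, key ha hba⟩

theorem lintegral_exp_map_fst_le {Y : Type*} [MeasurableSpace Y] {μ : Measure (Y × Y)}
    {F : Y → ℝ} (hF : Measurable F) {c : ℝ} (h : ∀ᵐ q ∂μ, F q.1 ≤ c + F q.2) :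
    ∫⁻ y, ENNReal.ofReal (exp (F y)) ∂μ.map Prod.fst ≤
      ENNReal.ofReal (exp c) * ∫⁻ y, ENNReal.ofReal (exp (F y)) ∂μ.map Prod.snd := by
  rw [lintegral_map (by fun_prop) measurable_fst, lintegral_map (by fun_prop) measurable_snd,
    ← lintegral_const_mul _ (by fun_prop)]
  refine lintegral_mono_ae (h.mono fun q hq => ?_)
  rw [← ENNReal.ofReal_mul (exp_pos _).le, ← exp_add]
  exact ENNReal.ofReal_le_ofReal (exp_le_exp.mpr hq)

section PathLaw

variable {X : Type*} [MeasurableSpace X] {m : X → Measure X}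

theorem measurable_finCons {n : ℕ} :
    Measurable fun p : X × (Fin n → X) => (Fin.cons p.1 p.2 : Fin (n + 1) → X) :=
  measurable_pi_iff.mpr fun i => by
    cases i using Fin.cases <;> simp only [Fin.cons_zero, Fin.cons_succ] <;> fun_prop

theorem measurable_finCons_left {n : ℕ} (y : X) :
    Measurable fun q : Fin n → X => (Fin.cons y q : Fin (n + 1) → X) :=
  measurable_finCons.comp measurable_prodMk_left

theorem measurable_map_finCons {n : ℕ} {κ : X → Measure (Fin n → X)} (hκ : Measurable κ)
    [∀ y, IsProbabilityMeasure (κ y)] :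
    Measurable fun y => (κ y).map fun q => (Fin.cons y q : Fin (n + 1) → X) := by
  let k : Kernel X (Fin n → X) := ⟨κ, hκ⟩
  have : IsMarkovKernel k := ⟨‹_›⟩
  refine Measure.measurable_of_measurable_coe _ fun s hs => ?_
  convert Kernel.measurable_kernel_prodMk_left (κ := k) (measurable_finCons hs) using 1
  funext y
  exact Measure.map_apply (measurable_finCons_left y) hs

theorem measurable_and_isProbabilityMeasure_pathLaw (hm : Measurable m)
    [∀ x, IsProbabilityMeasure (m x)] (n : ℕ) :
    Measurable (pathLaw m n) ∧ ∀ x, IsProbabilityMeasure (pathLaw m n x) := by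
  induction n with
  | zero => exact ⟨measurable_const, fun _ => Measure.dirac.isProbabilityMeasure⟩
  | succ n ih =>
    obtain ⟨hmeas, hprob⟩ := ih
    have hcons := measurable_map_finCons hmeas
    refine ⟨(Measure.measurable_bind' hcons).comp hm, fun x => ⟨?_⟩⟩
    simp only [pathLaw]
    rw [Measure.bind_apply MeasurableSet.univ hcons.aemeasurable]
    simp [Measure.map_apply (measurable_finCons_left _) MeasurableSet.univ]

theorem lintegral_pathLaw_succ (hm : Measurable m) [∀ x, IsProbabilityMeasure (m x)] (n : ℕ)
    {G : (Fin (n + 1) → X) → ℝ≥0∞} (hG : Measurable G) (x : X) :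
    ∫⁻ q, G q ∂pathLaw m (n + 1) x = ∫⁻ y, ∫⁻ q, G (Fin.cons y q) ∂pathLaw m n y ∂m x := by
  obtain ⟨hmeas, hprob⟩ := measurable_and_isProbabilityMeasure_pathLaw hm n
  rw [pathLaw, Measure.lintegral_bind (measurable_map_finCons hmeas).aemeasurable
    hG.aemeasurable]
  exact lintegral_congr fun y => lintegral_map hG (measurable_finCons_left y)

end PathLaw

section TransferOperator

variable {X : Type*} [MeasurableSpace X] {m : X → Measure X} {f : X → ℝ} {M : ℝ}

noncomputable def transferOp (m : X → Measure X) (f φ : X → ℝ) (x : X) : ℝ :=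
  ∫ y, exp (f y) * φ y ∂m x

theorem transferOp_smul (c : ℝ) (φ : X → ℝ) :
    transferOp m f (c • φ) = c • transferOp m f φ := by
  ext x
  simp only [transferOp, Pi.smul_apply, smul_eq_mul, ← integral_const_mul, mul_left_comm]

theorem transferOp_iterate_smul (n : ℕ) (c : ℝ) (φ : X → ℝ) :
    (transferOp m f)^[n] (c • φ) = c • (transferOp m f)^[n] φ :=
  Function.Commute.iterate_left (fun φ => transferOp_smul c φ) n φ

theorem measurable_transferOp (hm : Measurable m) (hf : Measurable f) {φ : X → ℝ}
    (hφ : Measurable φ) : Measurable (transferOp m f φ) :=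
  (StronglyMeasurable.integral_kernel (κ := ⟨m, hm⟩)
    ((measurable_exp.comp hf).mul hφ).stronglyMeasurable).measurable

theorem measurable_transferOp_iterate (hm : Measurable m) (hf : Measurable f) {φ : X → ℝ}
    (hφ : Measurable φ) (n : ℕ) : Measurable ((transferOp m f)^[n] φ) := by
  induction n with
  | zero => exact hφ
  | succ n ih => rw [Function.iterate_succ_apply']; exact measurable_transferOp hm hf ih

theorem integrable_exp_mul {μ : Measure X} [IsFiniteMeasure μ] (hf : Measurable f)
    (hfM : ∀ x, f x ≤ M) {φ : X → ℝ} {B : ℝ} (hφ : Measurable φ) (hφB : ∀ x, |φ x| ≤ B) :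
    Integrable (fun y => exp (f y) * φ y) μ := by
  exact Integrable.mono' (integrable_const (exp M * B))
    ((measurable_exp.comp hf).mul hφ).aestronglyMeasurable
    (ae_of_all _ fun y => norm_exp_mul_le (hfM y) (hφB y))

section FiniteKernel

variable [∀ x, IsFiniteMeasure (m x)]

theorem tendsto_transferOp (hf : Measurable f) (hfM : ∀ x, f x ≤ M) {F : ℕ → X → ℝ}
    {φ : X → ℝ} {B : ℝ} (hF : ∀ N, Measurable (F N)) (hFB : ∀ N x, |F N x| ≤ B)
    (hlim : ∀ x, Tendsto (fun N => F N x) atTop (𝓝 (φ x))) (x : X) :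
    Tendsto (fun N => transferOp m f (F N) x) atTop (𝓝 (transferOp m f φ x)) :=
  tendsto_integral_of_dominated_convergence (fun _ => exp M * B)
    (fun N => ((measurable_exp.comp hf).mul (hF N)).aestronglyMeasurable) (integrable_const _)
    (fun N => ae_of_all _ fun y => norm_exp_mul_le (hfM y) (hFB N y))
    (ae_of_all _ fun y => (hlim y).const_mul _)

theorem transferOp_expect (hf : Measurable f) (hfM : ∀ x, f x ≤ M) {ι : Type*} (s : Finset ι)
    {p : ι → X → ℝ} {B : ℝ} (hp : ∀ i, Measurable (p i)) (hpB : ∀ i x, |p i x| ≤ B) (x : X) :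
    transferOp m f (fun y => 𝔼 i ∈ s, p i y) x = 𝔼 i ∈ s, transferOp m f (p i) x := by
  simp only [transferOp, Finset.expect_eq_sum_div_card, mul_div_assoc', Finset.mul_sum,
    integral_div]
  rw [integral_finsetSum _ fun i _ => integrable_exp_mul hf hfM (hp i) (hpB i)]

theorem transferOp_mono (hf : Measurable f) (hfM : ∀ x, f x ≤ M) {φ ψ : X → ℝ} {B B' : ℝ}
    (hφ : Measurable φ) (hφB : ∀ x, |φ x| ≤ B) (hψ : Measurable ψ) (hψB : ∀ x, |ψ x| ≤ B')
    (hle : φ ≤ ψ) : transferOp m f φ ≤ transferOp m f ψ := fun _ =>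
  integral_mono (integrable_exp_mul hf hfM hφ hφB) (integrable_exp_mul hf hfM hψ hψB)
    fun y => mul_le_mul_of_nonneg_left (hle y) (exp_pos _).le

theorem exists_transferOp_eq_mul_of_orbit [PseudoMetricSpace X]
    [TopologicalSpace.SeparableSpace X] (hf : Measurable f) (hfM : ∀ x, f x ≤ M)
    {ϱ a b : ℝ} {ω : ℝ → ℝ} (hω : Tendsto ω (𝓝[≥] 0) (𝓝 0)) {p : ℕ → X → ℝ}
    (hp : ∀ n, Measurable (p n)) (hpab : ∀ n x, p n x ∈ Icc a b)
    (hpω : ∀ n x y, |p n x - p n y| ≤ ω (dist x y))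
    (hLp : ∀ n x, transferOp m f (p n) x = ϱ * p (n + 1) x) :
    ∃ h : X → ℝ, (∀ x, h x ∈ Icc a b) ∧ (∀ x y, |h x - h y| ≤ ω (dist x y)) ∧
      ∀ x, transferOp m f h x = ϱ * h x := by
  set A : ℕ → X → ℝ := fun N x => 𝔼 n ∈ Finset.range (N + 1), p n x
  have hne (N : ℕ) : (Finset.range (N + 1)).Nonempty :=
    Finset.nonempty_range_iff.mpr N.succ_ne_zero
  have hA_mem (N x) : A N x ∈ Icc a b :=
    ⟨Finset.le_expect (hne N) fun n _ => (hpab n x).1,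
      Finset.expect_le (hne N) fun n _ => (hpab n x).2⟩
  have hA_ω (N x y) : |A N x - A N y| ≤ ω (dist x y) := by
    rw [← Finset.expect_sub_distrib]
    exact (Finset.abs_expect_le _ _).trans (Finset.expect_le (hne N) fun n _ => hpω n x y)
  have hA_meas (N) : Measurable (A N) := by
    simp only [A, Finset.expect_eq_sum_div_card]
    exact (Finset.measurable_sum _ fun n _ => hp n).div_const _
  have habs {c : ℝ} (hc : c ∈ Icc a b) : |c| ≤ max |a| |b| := abs_le_max_abs_abs hc.1 hc.2
  have hLA (N x) : transferOp m f (A N) x = ϱ * (A N x + (p (N + 1) x - p 0 x) / (N + 1)) := by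
    have hshift : 𝔼 n ∈ Finset.range (N + 1), p (n + 1) x =
        A N x + (p (N + 1) x - p 0 x) / (N + 1) := by
      simp only [A, Finset.expect_eq_sum_div_card, Finset.card_range,
        ← Finset.sum_range_sub (fun n => p n x), Finset.sum_sub_distrib]
      push_cast
      ring
    rw [transferOp_expect hf hfM _ hp fun n x => habs (hpab n x)]
    simp only [hLp]
    rw [← Finset.mul_expect, hshift]
  have herr (x) : Tendsto (fun N : ℕ => (p (N + 1) x - p 0 x) / ((N : ℝ) + 1)) atTop (𝓝 0) :=
    tendsto_bdd_div_atTop_nhds_zero (b := a - b) (B := b - a)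
      (Eventually.of_forall fun N => by linarith [(hpab (N + 1) x).1, (hpab 0 x).2])
      (Eventually.of_forall fun N => by linarith [(hpab (N + 1) x).2, (hpab 0 x).1])
      (tendsto_atTop_add_const_right _ 1 tendsto_natCast_atTop_atTop)
  obtain ⟨φ, h, hφ, hlim⟩ := (equicontinuous_of_abs_sub_le hω hA_ω).exists_tendsto_subseq hA_mem
  refine ⟨h, fun x => isClosed_Icc.mem_of_tendsto (hlim x) (Eventually.of_forall fun N =>
    hA_mem _ x), fun x y => le_of_tendsto ((hlim x).sub (hlim y)).abs
    (Eventually.of_forall fun N => hA_ω _ x y), fun x => ?_⟩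
  refine tendsto_nhds_unique (tendsto_transferOp hf hfM (fun N => hA_meas (φ N))
    (fun N y => habs (hA_mem (φ N) y)) hlim x) ?_
  simp only [hLA]
  simpa using ((hlim x).add ((herr x).comp hφ.tendsto_atTop)).const_mul ϱ

end FiniteKernel

variable [∀ x, IsProbabilityMeasure (m x)]

theorem abs_transferOp_le (hfM : ∀ x, f x ≤ M) {φ : X → ℝ} {B : ℝ} (hφB : ∀ x, |φ x| ≤ B)
    (x : X) : |transferOp m f φ x| ≤ exp M * B := by
  have := norm_integral_le_of_norm_le_const (μ := m x) (f := fun y => exp (f y) * φ y)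
    (C := exp M * B) (ae_of_all _ fun y => norm_exp_mul_le (hfM y) (hφB y))
  simpa [transferOp] using this

theorem abs_transferOp_iterate_le (hfM : ∀ x, f x ≤ M) {φ : X → ℝ} {B : ℝ}
    (hφB : ∀ x, |φ x| ≤ B) (n : ℕ) (x : X) :
    |(transferOp m f)^[n] φ x| ≤ exp M ^ n * B := by
  induction n generalizing x with
  | zero => simpa using hφB x
  | succ n ih =>
    rw [Function.iterate_succ_apply', pow_succ', mul_assoc]
    exact abs_transferOp_le hfM ih x

theorem abs_transferOp_iterate_one_le (hfM : ∀ x, f x ≤ M) (n : ℕ) (x : X) :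
    |(transferOp m f)^[n] 1 x| ≤ exp M ^ n := by
  simpa using abs_transferOp_iterate_le (φ := 1) (B := 1) hfM (fun _ => by simp) n x

theorem transferOp_iterate_mono (hm : Measurable m) (hf : Measurable f) (hfM : ∀ x, f x ≤ M)
    {φ ψ : X → ℝ} {B B' : ℝ} (hφ : Measurable φ) (hφB : ∀ x, |φ x| ≤ B) (hψ : Measurable ψ)
    (hψB : ∀ x, |ψ x| ≤ B') (hle : φ ≤ ψ) (n : ℕ) :
    (transferOp m f)^[n] φ ≤ (transferOp m f)^[n] ψ := by
  induction n with
  | zero => exact hle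
  | succ n ih =>
    simp only [Function.iterate_succ_apply']
    exact transferOp_mono hf hfM (measurable_transferOp_iterate hm hf hφ n)
      (abs_transferOp_iterate_le hfM hφB n) (measurable_transferOp_iterate hm hf hψ n)
      (abs_transferOp_iterate_le hfM hψB n) ih

theorem pow_exp_neg_le_transferOp_iterate_one (hm : Measurable m) (hf : Measurable f)
    (hfM : ∀ x, |f x| ≤ M) (n : ℕ) (x : X) : exp (-M) ^ n ≤ (transferOp m f)^[n] 1 x := by
  induction n generalizing x with
  | zero => simp
  | succ n ih =>
    have hint := integrable_exp_mul (μ := m x) hf (fun y => (le_abs_self _).trans (hfM y))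
      (measurable_transferOp_iterate hm hf measurable_one n)
      (abs_transferOp_iterate_one_le (fun y => (le_abs_self _).trans (hfM y)) n)
    rw [Function.iterate_succ_apply', pow_succ']
    calc exp (-M) * exp (-M) ^ n = ∫ _, exp (-M) * exp (-M) ^ n ∂m x := by simp
      _ ≤ ∫ y, exp (f y) * (transferOp m f)^[n] 1 y ∂m x :=
        integral_mono (integrable_const _) hint fun y =>
          mul_le_mul (exp_le_exp.mpr (neg_le_of_abs_le (hfM y))) (ih y) (by positivity)
            (exp_pos _).le

theorem transferOp_iterate_one_pos (hm : Measurable m) (hf : Measurable f)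
    (hfM : ∀ x, |f x| ≤ M) (n : ℕ) (x : X) : 0 < (transferOp m f)^[n] 1 x :=
  (pow_pos (exp_pos _) n).trans_le (pow_exp_neg_le_transferOp_iterate_one hm hf hfM n x)

theorem ofReal_transferOp_iterate_one (hm : Measurable m) (hf : Measurable f)
    (hfM : ∀ x, |f x| ≤ M) (n : ℕ) (x : X) :
    ENNReal.ofReal ((transferOp m f)^[n] 1 x) =
      ∫⁻ q, ENNReal.ofReal (exp (∑ i, f (q i))) ∂pathLaw m n x := by
  induction n generalizing x with
  | zero => simp [pathLaw]
  | succ n ih =>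
    have hfM' : ∀ y, f y ≤ M := fun y => (le_abs_self _).trans (hfM y)
    rw [Function.iterate_succ_apply', lintegral_pathLaw_succ hm n (by fun_prop) x, transferOp,
      ofReal_integral_eq_lintegral_ofReal (integrable_exp_mul hf hfM'
        (measurable_transferOp_iterate hm hf measurable_one n)
        (abs_transferOp_iterate_one_le hfM' n))
        (ae_of_all _ fun y => mul_nonneg (exp_pos _).le
          (transferOp_iterate_one_pos hm hf hfM n y).le)]
    refine lintegral_congr fun y => ?_
    simp only [Fin.sum_univ_succ, Fin.cons_zero, Fin.cons_succ, exp_add,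
      ENNReal.ofReal_mul (exp_pos _).le, ih]
    rw [lintegral_const_mul _ (by fun_prop)]

theorem transferOp_iterate_one_le_of_coupling (hm : Measurable m) (hf : Measurable f)
    (hfM : ∀ x, |f x| ≤ M) {n : ℕ} {x y : X} {μ : Measure ((Fin n → X) × (Fin n → X))}
    (hμx : μ.map Prod.fst = pathLaw m n x) (hμy : μ.map Prod.snd = pathLaw m n y) {c : ℝ}
    (hflat : ∀ᵐ q ∂μ, |∑ i, f (q.1 i) - ∑ i, f (q.2 i)| ≤ c) :
    (transferOp m f)^[n] 1 x ≤ exp c * (transferOp m f)^[n] 1 y := by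
  rw [← ENNReal.ofReal_le_ofReal_iff (mul_pos (exp_pos c)
      (transferOp_iterate_one_pos hm hf hfM n y)).le, ENNReal.ofReal_mul (exp_pos c).le,
    ofReal_transferOp_iterate_one hm hf hfM, ofReal_transferOp_iterate_one hm hf hfM, ← hμx, ← hμy]
  exact lintegral_exp_map_fst_le (by fun_prop)
    (hflat.mono fun q hq => by linarith [(abs_le.mp hq).2])

theorem transferOp_iterate_le_const_mul (hm : Measurable m) (hf : Measurable f)
    (hfM : ∀ x, f x ≤ M) {φ : X → ℝ} {B c : ℝ} (hφ : Measurable φ) (hφB : ∀ x, |φ x| ≤ B)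
    (hφc : ∀ x, φ x ≤ c) (n : ℕ) (x : X) :
    (transferOp m f)^[n] φ x ≤ c * (transferOp m f)^[n] 1 x := by
  have := transferOp_iterate_mono hm hf hfM hφ hφB (ψ := c • 1) (by fun_prop)
    (B' := |c|) (fun _ => by simp) (fun y => by simpa using hφc y) n x
  rwa [transferOp_iterate_smul] at this

theorem const_mul_le_transferOp_iterate (hm : Measurable m) (hf : Measurable f)
    (hfM : ∀ x, f x ≤ M) {φ : X → ℝ} {B c : ℝ} (hφ : Measurable φ) (hφB : ∀ x, |φ x| ≤ B)
    (hφc : ∀ x, c ≤ φ x) (n : ℕ) (x : X) :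
    c * (transferOp m f)^[n] 1 x ≤ (transferOp m f)^[n] φ x := by
  have := transferOp_iterate_mono hm hf hfM (φ := c • 1) (by fun_prop) (B := |c|)
    (fun _ => by simp) hφ hφB (fun y => by simpa using hφc y) n x
  rwa [transferOp_iterate_smul] at this

theorem transferOp_iterate_one_quasiMultiplicative (hm : Measurable m) (hf : Measurable f)
    (hfM : ∀ x, |f x| ≤ M) {K : ℝ}
    (hK : ∀ n x y, (transferOp m f)^[n] 1 x ≤ K * (transferOp m f)^[n] 1 y) (n k : ℕ) (x : X) :
    (transferOp m f)^[n + k] 1 x ≤ K * ((transferOp m f)^[n] 1 x * (transferOp m f)^[k] 1 x) ∧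
      (transferOp m f)^[n] 1 x * (transferOp m f)^[k] 1 x ≤ K * (transferOp m f)^[n + k] 1 x := by
  set g : ℕ → X → ℝ := fun n => (transferOp m f)^[n] 1
  have hfM' : ∀ y, f y ≤ M := fun y => (le_abs_self _).trans (hfM y)
  have hK0 : 0 < K := by simpa using (zero_lt_one' ℝ).trans_le (hK 0 x x)
  have hadd : g (n + k) x = (transferOp m f)^[n] (g k) x :=
    congrFun (Function.iterate_add_apply _ _ _ _) x
  have hg := measurable_transferOp_iterate hm hf measurable_one k
  have hgB := abs_transferOp_iterate_one_le (m := m) hfM' k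
  constructor
  · calc g (n + k) x ≤ (K * g k x) * g n x := hadd ▸
          transferOp_iterate_le_const_mul hm hf hfM' hg hgB (fun y => hK k y x) n x
      _ = K * (g n x * g k x) := by ring
  · have := hadd ▸ const_mul_le_transferOp_iterate hm hf hfM' hg hgB
      (c := g k x / K) (fun y => (div_le_iff₀' hK0).mpr (hK k x y)) n x
    rw [div_mul_eq_mul_div, div_le_iff₀' hK0, mul_comm (g k x)] at this
    exact this

theorem transferOp_iterate_one_bounds_of_limsup (hm : Measurable m) (hf : Measurable f)
    (hfM : ∀ x, |f x| ≤ M) {K : ℝ}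
    (hK : ∀ n x y, (transferOp m f)^[n] 1 x ≤ K * (transferOp m f)^[n] 1 y) {ϱ : ℝ} (hϱ : 0 ≤ ϱ)
    (hlimsup : ∀ x, limsup (fun n : ℕ => ENNReal.ofReal ((transferOp m f)^[n] 1 x) ^ ((1 : ℝ) / n))
      atTop = ENNReal.ofReal ϱ) (n : ℕ) (x : X) :
    ϱ ^ n ≤ K * (transferOp m f)^[n] 1 x ∧ (transferOp m f)^[n] 1 x ≤ K * ϱ ^ n := by
  have hpos (n) := transferOp_iterate_one_pos hm hf hfM n x
  obtain ⟨r, hr, hlim, hbounds⟩ := exists_pow_bounds_of_quasiMultiplicative hpos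
    (fun n k => (transferOp_iterate_one_quasiMultiplicative hm hf hfM hK n k x).1)
    (fun n k => (transferOp_iterate_one_quasiMultiplicative hm hf hfM hK n k x).2)
  obtain rfl : r = ϱ := (ENNReal.ofReal_eq_ofReal_iff hr.le hϱ).mp <| by
    rw [← hlimsup x, limsup_ofReal_rpow_eq (fun n => (hpos n).le) hlim]
  exact hbounds n

theorem exists_transferOp_eigenfunction_of_harnack [PseudoMetricSpace X]
    [TopologicalSpace.SeparableSpace X] (hm : Measurable m) (hf : Measurable f)
    (hfM : ∀ x, |f x| ≤ M) {ω : ℝ → ℝ} (hω : Tendsto ω (𝓝[≥] 0) (𝓝 0)) {K : ℝ}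
    (hωK : ∀ x y : X, 0 ≤ ω (dist x y) ∧ exp (ω (dist x y)) ≤ K)
    (hharnack : ∀ n x y, (transferOp m f)^[n] 1 x ≤ exp (ω (dist x y)) * (transferOp m f)^[n] 1 y)
    {ϱ : ℝ} (hϱ : 0 < ϱ)
    (hlimsup : ∀ x, limsup (fun n : ℕ => ENNReal.ofReal ((transferOp m f)^[n] 1 x) ^ ((1 : ℝ) / n))
      atTop = ENNReal.ofReal ϱ) :
    ∃ h : X → ℝ, (∀ x, h x ∈ Icc K⁻¹ K) ∧ (∀ x y, |h x - h y| ≤ K * K * ω (dist x y)) ∧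
      ∀ x, transferOp m f h x = ϱ * h x := by
  set g : ℕ → X → ℝ := fun n => (transferOp m f)^[n] 1
  have hK (n x y) : g n x ≤ K * g n y := (hharnack n x y).trans <| mul_le_mul_of_nonneg_right
    (hωK x y).2 (transferOp_iterate_one_pos hm hf hfM n y).le
  have hbounds := transferOp_iterate_one_bounds_of_limsup hm hf hfM hK hϱ.le hlimsup
  set p : ℕ → X → ℝ := fun n => (ϱ ^ n)⁻¹ • g n
  have hp_mem (n x) : p n x ∈ Icc K⁻¹ K := by
    have hK0 : 0 < K := (exp_pos _).trans_le (hωK x x).2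
    have hϱn := pow_pos hϱ n
    simp only [p, Pi.smul_apply, smul_eq_mul, mem_Icc]
    rw [le_inv_mul_iff₀ hϱn, inv_mul_le_iff₀ hϱn, ← div_eq_mul_inv, div_le_iff₀ hK0]
    constructor <;> linarith [hbounds n x]
  have hp_harnack (n) (x y : X) : p n x ≤ exp (ω (dist x y)) * p n y := by
    simp only [p, Pi.smul_apply, smul_eq_mul]
    rw [mul_left_comm]
    exact mul_le_mul_of_nonneg_left (hharnack n x y) (inv_nonneg.mpr (pow_pos hϱ n).le)
  have hp_nonneg (n x) : 0 ≤ p n x :=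
    mul_nonneg (inv_nonneg.mpr (pow_pos hϱ n).le) (transferOp_iterate_one_pos hm hf hfM n x).le
  refine exists_transferOp_eq_mul_of_orbit (m := m) hf (fun x => (le_abs_self _).trans (hfM x))
    (by simpa using hω.const_mul (K * K)) (p := p)
    (fun n => (measurable_transferOp_iterate hm hf measurable_one n).const_smul _) hp_mem
    (fun n x y => ?_) (fun n x => ?_)
  · refine abs_sub_le_of_le_exp_mul (hωK x y).1 (hωK x y).2 ⟨hp_nonneg n x, (hp_mem n x).2⟩
      ⟨hp_nonneg n y, (hp_mem n y).2⟩ (hp_harnack n x y) ?_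
    simpa [dist_comm] using hp_harnack n y x
  · simp only [p, transferOp_smul, Pi.smul_apply, smul_eq_mul, g, Function.iterate_succ_apply',
      pow_succ]
    field_simp [hϱ.ne']

end TransferOperator


theorem stmt_18_general
    {X : Type*} [MetricSpace X]
    [TopologicalSpace.SeparableSpace X]
    [MeasurableSpace X] [BorelSpace X]
    (hdiam : EMetric.diam (Set.univ : Set X) ≠ ⊤)
    (m : X → Measure X) (hmp : ∀ x, IsProbabilityMeasure (m x))
    (hmm : ∀ A : Set X, MeasurableSet A → Measurable fun x => m x A)
    (ω : ℝ → ℝ) (hωc : ContinuousOn ω (Set.Ici 0)) (hωm : MonotoneOn ω (Set.Ici 0))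
    (hω0 : ω 0 = 0)
    (f : X → ℝ) (hfb : ∃ M, ∀ x, |f x| ≤ M)
    (hfH : ∃ Cf : ℝ, ∀ x y, |f x - f y| ≤ Cf * ω (dist x y))
    (Pl : (n : ℕ) → X → X → Measure ((Fin n → X) × (Fin n → X)))
    (hmarg1 : ∀ n x y, (Pl n x y).map Prod.fst = pathLaw m n x)
    (hmarg2 : ∀ n x y, (Pl n x y).map Prod.snd = pathLaw m n y)
    (C : ℝ) (hC : 0 < C)
    (hflat : ∀ n x y, ∀ᵐ q ∂ (Pl n x y),
      |(∑ i, f (q.1 i)) - ∑ i, f (q.2 i)| ≤ C * ω (dist x y))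
    (L : (X → ℝ) → (X → ℝ))
    (hL : ∀ φ x, L φ x = ∫ y, Real.exp (f y) * φ y ∂ m x)
    (ϱ : ℝ) (hϱpos : 0 < ϱ)
    (hϱ : ∀ x, Filter.limsup
      (fun n : ℕ => (ENNReal.ofReal (L^[n] (fun _ => 1) x)) ^ ((1 : ℝ) / (n : ℝ)))
      atTop = ENNReal.ofReal ϱ) :
    ∃ A B : ℝ, 0 < A ∧ A ≤ B ∧ ∃ h : X → ℝ,
      (∀ x, A ≤ h x ∧ h x ≤ B) ∧
      (∃ Ch : ℝ, ∀ x y, |h x - h y| ≤ Ch * ω (dist x y)) ∧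
      ∀ x, L h x = ϱ * h x := by
  obtain rfl : L = transferOp m f := funext fun φ => funext (hL φ)
  obtain ⟨M, hfM⟩ := hfb
  obtain ⟨Cf, hfH⟩ := hfH
  have hω : Tendsto ω (𝓝[≥] 0) (𝓝 0) := by simpa [hω0] using (hωc 0 self_mem_Ici).tendsto
  have hω_mono {s t : ℝ} (hs : 0 ≤ s) (hst : s ≤ t) : ω s ≤ ω t := hωm hs (hs.trans hst) hst
  have hf : Measurable f := ((equicontinuous_of_abs_sub_le (F := fun _ : Unit => f)
    (by simpa using hω.const_mul Cf) fun _ => hfH).continuous ()).measurable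
  have hm : Measurable m := Measure.measurable_of_measurable_coe m hmm
  set D := Metric.diam (univ : Set X)
  have hdist (x y : X) : dist x y ≤ D :=
    Metric.dist_le_diam_of_mem (Metric.isBounded_iff_ediam_ne_top.mpr hdiam) trivial trivial
  have hωK (x y : X) : 0 ≤ C * ω (dist x y) ∧ exp (C * ω (dist x y)) ≤ exp (C * ω D) :=
    ⟨mul_nonneg hC.le (hω0 ▸ hω_mono le_rfl dist_nonneg),
      exp_le_exp.mpr (mul_le_mul_of_nonneg_left (hω_mono dist_nonneg (hdist x y)) hC.le)⟩
  obtain ⟨h, hh_mem, hh_holder, hh_eigen⟩ := exists_transferOp_eigenfunction_of_harnack hm hf hfM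
    (by simpa using hω.const_mul C) hωK (fun n x y => transferOp_iterate_one_le_of_coupling hm hf
      hfM (hmarg1 n x y) (hmarg2 n x y) (hflat n x y)) hϱpos hϱ
  have hK : 1 ≤ exp (C * ω D) :=
    one_le_exp (mul_nonneg hC.le (hω0 ▸ hω_mono le_rfl Metric.diam_nonneg))
  exact ⟨_, _, inv_pos.mpr (exp_pos _), (inv_le_one_of_one_le₀ hK).trans hK, h, hh_mem,
    ⟨_, fun x y => (hh_holder x y).trans_eq (mul_assoc _ _ _).symm⟩, hh_eigen⟩

/-- Existence of a strictly positive bounded `ω`-Hölder eigenfunction of the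
transfer operator of a flat potential, with eigenvalue the spectral radius,
on a space of finite diameter. -/
theorem stmt_18
    {X : Type*} [MetricSpace X] [CompleteSpace X]
    [TopologicalSpace.SeparableSpace X]
    [MeasurableSpace X] [BorelSpace X]
    (hdiam : EMetric.diam (Set.univ : Set X) ≠ ⊤)
    (m : X → Measure X) (hmp : ∀ x, IsProbabilityMeasure (m x))
    (hmm : ∀ A : Set X, MeasurableSet A → Measurable fun x => m x A)
    (ω : ℝ → ℝ) (hωc : ContinuousOn ω (Set.Ici 0)) (hωm : MonotoneOn ω (Set.Ici 0))
    (hωconc : ConcaveOn ℝ (Set.Ici 0) ω) (hω0 : ω 0 = 0)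
    (f : X → ℝ) (hfb : ∃ M, ∀ x, |f x| ≤ M)
    (hfH : ∃ Cf : ℝ, ∀ x y, |f x - f y| ≤ Cf * ω (dist x y))
    (Pl : (n : ℕ) → X → X → Measure ((Fin n → X) × (Fin n → X)))
    (hPlp : ∀ n x y, IsProbabilityMeasure (Pl n x y))
    (hPlmeas : ∀ n : ℕ, ∀ A : Set ((Fin n → X) × (Fin n → X)), MeasurableSet A →
      Measurable fun q : X × X => Pl n q.1 q.2 A)
    (hmarg1 : ∀ n x y, (Pl n x y).map Prod.fst = pathLaw m n x)
    (hmarg2 : ∀ n x y, (Pl n x y).map Prod.snd = pathLaw m n y)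
    (C : ℝ) (hC : 0 < C)
    (hflat : ∀ n x y, ∀ᵐ q ∂ (Pl n x y),
      |(∑ i, f (q.1 i)) - ∑ i, f (q.2 i)| ≤ C * ω (dist x y))
    (L : (X → ℝ) → (X → ℝ))
    (hL : ∀ φ x, L φ x = ∫ y, Real.exp (f y) * φ y ∂ m x)
    (ϱ : ℝ) (hϱpos : 0 < ϱ)
    (hϱ : ∀ x, Filter.limsup
      (fun n : ℕ => (ENNReal.ofReal (L^[n] (fun _ => 1) x)) ^ ((1 : ℝ) / (n : ℝ)))
      atTop = ENNReal.ofReal ϱ) :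
    ∃ A B : ℝ, 0 < A ∧ A ≤ B ∧ ∃ h : X → ℝ,
      (∀ x, A ≤ h x ∧ h x ≤ B) ∧
      (∃ Ch : ℝ, ∀ x y, |h x - h y| ≤ Ch * ω (dist x y)) ∧
      ∀ x, L h x = ϱ * h x :=
  stmt_18_general hdiam m hmp hmm ω hωc hωm hω0 f hfb hfH Pl hmarg1 hmarg2 C hC hflat L hL ϱ hϱpos
    hϱ
end
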